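/- arXiv:1308.2170 — 3 statements merged into one kernel-verified Lean document; each statement's English description precedes it below -/
import Mathlib

section
/- Let e ≥ 2, r ≥ 2, let Y ∈ Λ, let π be a permutation of {1,…,r}, let M ∈ 𝔑(Y,π) and let L ∈ M(r,e) with M ∼ L. Then L ∈ 𝔑(Y,π). -/
open scoped Classical

namespace AK
noncomputable section



/-! ### Matrices, order from base tuple, abacus β-sets -/

/-- The order ≺ on columns determined by a base tuple `B`. -/
def prec {e : ℕ} (B : Fin e → ℕ) (i j : Fin e) : Prop :=
  B i < B j ∨ (B i = B j ∧ i < j)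

/-- `rank B i = π(B)⁻¹(i)`, the number of columns ≺-smaller than `i`. -/
def rank {e : ℕ} (B : Fin e → ℕ) (i : Fin e) : Fin e :=
  ⟨(Finset.univ.filter (fun j => prec B j i)).card, by
    have h1 : (Finset.univ.filter (fun j => prec B j i)) ⊆ Finset.univ.erase i := by
      intro j hj
      rw [Finset.mem_filter] at hj
      refine Finset.mem_erase.mpr ⟨?_, Finset.mem_univ j⟩
      rintro rfl
      rcases hj.2 with h | ⟨-, h⟩ <;> exact lt_irrefl _ h
    have h2 := Finset.card_le_card h1
    have h3 : (Finset.univ.erase i).card < Finset.univ.card :=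
      Finset.card_erase_lt_of_mem (Finset.mem_univ i)
    simpa using lt_of_le_of_lt h2 h3⟩

/-- The number of beads on runner `i` of the abacus of component `s` of `Pt(B,M)`. -/
def beads {e r : ℕ} (B : Fin e → ℕ) (M : Fin r → Fin e → Bool) (s : Fin r) (i : Fin e) : ℕ :=
  B i + (if M s (rank B i) then 1 else 0)

/-- The canonical β-set of component `s` of `Pt(B,M)`. -/
def Tset {e r : ℕ} (B : Fin e → ℕ) (M : Fin r → Fin e → Bool) (s : Fin r) : Set ℤ :=
  {z | z < 0 ∨ (0 ≤ z ∧ ∃ h : z.toNat % e < e, z.toNat / e < beads B M s ⟨z.toNat % e, h⟩)}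

/-- `n_s`, the total number of beads of component `s`. -/
def nsum {e r : ℕ} (B : Fin e → ℕ) (M : Fin r → Fin e → Bool) (s : Fin r) : ℕ :=
  ∑ i : Fin e, beads B M s i

/-- Decreasing enumeration of a set of integers: `tEnum T x` is `t_{x+1}`. -/
noncomputable def tEnum (T : Set ℤ) : ℕ → ℤ
  | 0 => sSup T
  | (x + 1) => sSup (T ∩ Set.Iio (tEnum T x))

/-- The multipartition `Pt(B,M)`: component `s`, part `p+1` (0-indexed parts). -/
noncomputable def PtPart {e r : ℕ} (B : Fin e → ℕ) (M : Fin r → Fin e → Bool)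
    (s : Fin r) (p : ℕ) : ℕ :=
  (tEnum (Tset B M s) p + (p + 1) - (nsum B M s : ℤ)).toNat

/-- The multicharge of `Pt(B,M)`. -/
noncomputable def PtCharge {e r : ℕ} (B : Fin e → ℕ) (M : Fin r → Fin e → Bool)
    (s : Fin r) : ZMod e :=
  (nsum B M s : ZMod e)

/-! ### Nodes, good nodes and Kleshchev multipartitions -/

/-- A node `(s, x, y)` (all 0-indexed). -/
abbrev Node (r : ℕ) := Fin r × ℕ × ℕ

/-- `A` is above `B`. -/
def NodeAbove {r : ℕ} (A B : Node r) : Prop :=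
  A.1 < B.1 ∨ (A.1 = B.1 ∧ A.2.1 < B.2.1)

/-- The residue of a node. -/
def res {e r : ℕ} (a : Fin r → ZMod e) (A : Node r) : ZMod e :=
  a A.1 - (A.2.1 : ZMod e) + (A.2.2 : ZMod e)

/-- `A` is a removable node of `lam`. -/
def Removable {r : ℕ} (lam : Fin r → ℕ → ℕ) (A : Node r) : Prop :=
  A.2.2 + 1 = lam A.1 A.2.1 ∧ lam A.1 (A.2.1 + 1) < lam A.1 A.2.1

/-- `A` is an addable node of `lam`. -/
def Addable {r : ℕ} (lam : Fin r → ℕ → ℕ) (A : Node r) : Prop :=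
  A.2.2 = lam A.1 A.2.1 ∧ (A.2.1 = 0 ∨ lam A.1 A.2.1 < lam A.1 (A.2.1 - 1))

/-- `A` is a normal node of `lam`. -/
def Normal {e r : ℕ} (a : Fin r → ZMod e) (lam : Fin r → ℕ → ℕ) (A : Node r) : Prop :=
  Removable lam A ∧
    ∀ B : Node r, Addable lam B → res a B = res a A → NodeAbove A B →
      Set.ncard {C : Node r | Addable lam C ∧ res a C = res a A ∧ NodeAbove A C ∧ NodeAbove C B}
        < Set.ncard {C : Node r | Removable lam C ∧ res a C = res a A ∧ NodeAbove A C ∧ NodeAbove C B}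

/-- `A` is a good node of `lam`: normal, and highest among normal nodes of its residue. -/
def Good {e r : ℕ} (a : Fin r → ZMod e) (lam : Fin r → ℕ → ℕ) (A : Node r) : Prop :=
  Normal a lam A ∧ ∀ B : Node r, Normal a lam B → res a B = res a A → B ≠ A → NodeAbove A B

/-- Remove the node `A` from `lam`. -/
def removeNode {r : ℕ} (lam : Fin r → ℕ → ℕ) (A : Node r) : Fin r → ℕ → ℕ :=
  fun s x => if s = A.1 ∧ x = A.2.1 then lam s x - 1 else lam s x

/-- Kleshchev multipartitions (for the multicharge `a`). -/
inductive IsKleshchev {e r : ℕ} (a : Fin r → ZMod e) : (Fin r → ℕ → ℕ) → Prop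
  | empty : IsKleshchev a (fun _ _ => 0)
  | step (lam : Fin r → ℕ → ℕ) (A : Node r) (hA : Good a lam A)
      (h : IsKleshchev a (removeNode lam A)) : IsKleshchev a lam

/-! ### Weights and bead swaps -/

/-- `δ₊^M(t,s)`. -/
def deltaP {e r : ℕ} (M : Fin r → Fin e → Bool) (t s : Fin r) : ℕ :=
  (Finset.univ.filter (fun i => M t i = true ∧ M s i = false)).card

/-- `wt^M(t,s)`. -/
def wtPair {e r : ℕ} (M : Fin r → Fin e → Bool) (t s : Fin r) : ℕ :=
  min (deltaP M t s) (deltaP M s t)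

/-- `wt(M)`. -/
def wtM {e r : ℕ} (M : Fin r → Fin e → Bool) : ℕ :=
  ∑ t : Fin r, ∑ s ∈ Finset.univ.filter (· < t), wtPair M t s

/-- `M'` is obtained from `M` by a bead swap. -/
def BeadSwap {e r : ℕ} (M M' : Fin r → Fin e → Bool) : Prop :=
  ∃ i j : Fin e, i ≠ j ∧ ∃ s t : Fin r, s ≠ t ∧
    M s i = true ∧ M t j = true ∧ M s j = false ∧ M t i = false ∧
    M' s i = false ∧ M' t j = false ∧ M' s j = true ∧ M' t i = true ∧
    (∀ s' i', (s' ≠ s ∧ s' ≠ t) ∨ (i' ≠ i ∧ i' ≠ j) → M' s' i' = M s' i')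


/-! ### Weight graphs and the sets `T^y(i,j)` -/

/-- The weight graph of `M`. -/
def wGraph {e r : ℕ} (M : Fin r → Fin e → Bool) : SimpleGraph (Fin r) :=
  SimpleGraph.fromRel (fun s t => wtPair M s t = 1)

/-- The weight graph of `M` is a tree. -/
def GTree {e r : ℕ} (M : Fin r → Fin e → Bool) : Prop :=
  (∀ s t : Fin r, s ≠ t → wtPair M s t ≤ 1) ∧ (wGraph M).IsTree

/-- The column vector `I(a)` (1-based rows `1,…,a` are ones). -/
def Ivec (r a : ℕ) : Fin r → Bool := fun s => decide (s.1 + 1 ≤ a)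

/-- The condition `(i,j) ∈ P_t(y)`. -/
def PtPairCond (r t : ℕ) (y : ℕ → ℕ) (iseq : Fin t → ℕ) (jseq : Fin (t + 1) → ℕ) : Prop :=
  jseq 0 = 1 ∧ jseq (Fin.last t) = r ∧
  (∀ m : Fin t, jseq m.castSucc ≤ iseq m) ∧
  (∀ m : Fin t, iseq m < jseq m.succ) ∧
  (∀ m : Fin t, 1 ≤ y (iseq m))

/-- The column vector `c_m(i,j)`: `I(i_m)` with the entries in (1-based) rows
`j_m` and `j_{m+1}` interchanged. -/
def cvec (r : ℕ) {t : ℕ} (iseq : Fin t → ℕ) (jseq : Fin (t + 1) → ℕ) (m : Fin t) :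
    Fin r → Bool :=
  fun s =>
    if s.1 + 1 = jseq m.castSucc then decide (jseq m.succ ≤ iseq m)
    else if s.1 + 1 = jseq m.succ then decide (jseq m.castSucc ≤ iseq m)
    else decide (s.1 + 1 ≤ iseq m)

/-- The multiset of columns of a matrix. -/
def colMultiset {e r : ℕ} (M : Fin r → Fin e → Bool) : Multiset (Fin r → Bool) :=
  (Finset.univ.val : Multiset (Fin e)).map fun c => fun s => M s c

/-- `M ∈ T^y(i,j)`. -/
def memT (r e : ℕ) (y : ℕ → ℕ) {t : ℕ} (iseq : Fin t → ℕ) (jseq : Fin (t + 1) → ℕ)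
    (M : Fin r → Fin e → Bool) : Prop :=
  ∃ w0 wr : ℕ,
    colMultiset M =
      (∑ a ∈ Finset.Icc 1 (r - 1),
        Multiset.replicate (if ∃ m, iseq m = a then y a - 1 else y a) (Ivec r a))
      + ((Finset.univ.val : Multiset (Fin t)).map (cvec r iseq jseq))
      + Multiset.replicate w0 (Ivec r 0) + Multiset.replicate wr (Ivec r r)

/-! ### The sets `𝔑(Y,π)` -/

/-- `Y_a` for a natural-number index `a`. -/
def Yat {e : ℕ} (r : ℕ) (Y : Fin r → Finset (Fin e)) (a : ℕ) : Finset (Fin e) :=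
  if h : a < r then Y ⟨a, h⟩ else ∅

/-- `Y ∈ Λ`. -/
def LambdaMem {e : ℕ} (r : ℕ) (Y : Fin r → Finset (Fin e)) : Prop :=
  (∀ a b : Fin r, a ≠ b → Disjoint (Y a) (Y b)) ∧
  (∀ c : Fin e, ∃ a, c ∈ Y a) ∧
  (Yat r Y 1).Nonempty ∧ (Yat r Y (r - 1)).Nonempty

/-- The matrix `Δ(Y,(i,j),w)`. -/
def DeltaM {e : ℕ} (r : ℕ) {t : ℕ} (Y : Fin r → Finset (Fin e))
    (iseq : Fin t → ℕ) (jseq : Fin (t + 1) → ℕ) (w : Fin t → ℕ) :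
    Fin r → Fin e → Bool :=
  fun s c =>
    if h : ∃ u : Fin t, ((Yat r Y (iseq u)).sort (· ≤ ·))[w u - 1]? = some c then
      cvec r iseq jseq (Classical.choose h) s
    else if h2 : ∃ a : Fin r, c ∈ Y a then Ivec r ((Classical.choose h2).1) s
    else false

/-- The set `𝔑(Y,π)`. -/
def Nset {e : ℕ} (r : ℕ) (Y : Fin r → Finset (Fin e)) (π : Equiv.Perm (Fin r)) :
    Set (Fin r → Fin e → Bool) :=
  {M | ∃ t, 1 ≤ t ∧ t ≤ r - 1 ∧
    ∃ (iseq : Fin t → ℕ) (jseq : Fin (t + 1) → ℕ) (w : Fin t → ℕ),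
      PtPairCond r t (fun a => (Yat r Y a).card) iseq jseq ∧
      (∀ u, 1 ≤ w u ∧ w u ≤ (Yat r Y (iseq u)).card) ∧
      M = fun s c => DeltaM r Y iseq jseq w (π s) c}

/-- The matrix `N(Y,π) = Δ^π(Y,((1),(1,r)),(1))`. -/
def Nzero {e : ℕ} (r : ℕ) (Y : Fin r → Finset (Fin e)) (π : Equiv.Perm (Fin r)) :
    Fin r → Fin e → Bool :=
  fun s c => DeltaM r Y (fun _ : Fin 1 => 1) ![1, r] (fun _ : Fin 1 => 1) (π s) c


/-!
Bead swaps preserve all row and column sums, so it suffices to see that membership in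
`𝔑(Y, π)` depends only on these margins. After undoing `π`, compare a matrix with the one whose
columns are `I(a)` for `c ∈ Y_a`: the first `k` rows of `Δ(Y, (i, j), w)` hold exactly one bead
fewer, for every `1 ≤ k < r`. Conversely, let `D` have the same margins. A column with `a` beads
has at most `min a k` of them in its first `k` rows; call the shortfall its deficit at `k`. The
row sums fix the total deficit at `1`, so at each `k` exactly one column is deficient. A column
whose deficit stays `≤ 1` is `I(a)` or `I(a)` with the bead of a row `p ≤ a` moved to a row
`q > a`, and the latter is deficient exactly on `[p, q)`. These intervals partition `[1, r)`,
which is the shape of `Δ(Y, (i, j), w)` with the `j`s as endpoints.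
-/

section Column

def ones {ι : Type*} [Fintype ι] (v : ι → Bool) : ℕ :=
  (Finset.univ.filter fun i => v i = true).card

lemma ones_comp_perm {ι : Type*} [Fintype ι] (v : ι → Bool) (σ : Equiv.Perm ι) :
    ones (v ∘ σ) = ones v :=
  Finset.card_equiv σ (by simp)

variable {r : ℕ}

def topOnes (v : Fin r → Bool) (k : ℕ) : ℕ :=
  (Finset.univ.filter fun x : Fin r => x.1 < k ∧ v x = true).card

def deficit (v : Fin r → Bool) (k : ℕ) : ℕ :=
  min (ones v) k - topOnes v k

lemma topOnes_le_min (v : Fin r → Bool) (k : ℕ) : topOnes v k ≤ min (ones v) k := by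
  refine le_min (Finset.card_le_card fun x => by simp +contextual) ?_
  calc topOnes v k ≤ (Finset.univ.filter fun x : Fin r => x.1 < k).card :=
        Finset.card_le_card fun x => by simp +contextual
    _ = min r k := Fin.card_filter_val_lt
    _ ≤ k := min_le_right _ _

lemma topOnes_add_deficit (v : Fin r → Bool) (k : ℕ) :
    topOnes v k + deficit v k = min (ones v) k :=
  Nat.add_sub_cancel' (topOnes_le_min v k)

lemma topOnes_zero (v : Fin r → Bool) : topOnes v 0 = 0 := by
  simp [topOnes]

lemma topOnes_of_le (v : Fin r → Bool) {k : ℕ} (hk : r ≤ k) : topOnes v k = ones v := by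
  simp only [topOnes, ones]
  congr 1
  ext x
  simp [lt_of_lt_of_le x.2 hk]

lemma topOnes_succ (v : Fin r → Bool) {k : ℕ} (hk : k < r) :
    topOnes v (k + 1) = topOnes v k + if v ⟨k, hk⟩ then 1 else 0 := by
  have hsplit : (Finset.univ.filter fun x : Fin r => x.1 < k + 1 ∧ v x = true) =
      (Finset.univ.filter fun x : Fin r => x.1 < k ∧ v x = true) ∪
        (Finset.univ.filter fun x : Fin r => x = ⟨k, hk⟩ ∧ v x = true) := by
    ext x
    simp only [Finset.mem_union, Finset.mem_filter, Finset.mem_univ, true_and, Fin.ext_iff]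
    cases v x <;> simp; omega
  rw [topOnes, hsplit, Finset.card_union_of_disjoint, ← topOnes]
  · congr 1
    split_ifs with h
    · exact Finset.card_eq_one.2 ⟨⟨k, hk⟩, by ext x; constructor <;> simp +contextual [h]⟩
    · exact Finset.card_eq_zero.2 (by ext x; simp +contextual [h])
  · simp only [Finset.disjoint_left, Finset.mem_filter, Fin.ext_iff]
    omega

lemma topOnes_Ivec {a k : ℕ} (hk : k ≤ r) : topOnes (Ivec r a) k = min a k := by
  induction k with
  | zero => simp [topOnes_zero]
  | succ k ih =>
    rw [topOnes_succ _ hk, ih (by omega), Ivec]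
    by_cases h : k + 1 ≤ a <;> simp [h] <;> omega

lemma ones_Ivec {a : ℕ} (ha : a ≤ r) : ones (Ivec r a) = a := by
  rw [← topOnes_of_le _ le_rfl, topOnes_Ivec le_rfl, min_eq_left ha]

lemma deficit_Ivec {a : ℕ} (ha : a ≤ r) (k : ℕ) : deficit (Ivec r a) k = 0 := by
  rw [deficit, ones_Ivec ha]
  rcases le_total k r with hk | hk
  · rw [topOnes_Ivec hk, Nat.sub_self]
  · rw [topOnes_of_le _ hk, ones_Ivec ha]
    omega

/-- `v` is `I(a)` with the bead of row `p` moved down to row `q` (rows counted from `1`). -/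
def IsSwapCol (v : Fin r → Bool) (a p q : ℕ) : Prop :=
  1 ≤ p ∧ p ≤ a ∧ a < q ∧ q ≤ r ∧
    ∀ x : Fin r, v x = decide ((x.1 + 1 ≤ a ∧ x.1 + 1 ≠ p) ∨ x.1 + 1 = q)

namespace IsSwapCol

variable {v : Fin r → Bool} {a p q : ℕ}

lemma topOnes_add (h : IsSwapCol v a p q) {k : ℕ} (hk : k ≤ r) :
    topOnes v k + (if p ≤ k then 1 else 0) = min a k + (if q ≤ k then 1 else 0) := by
  obtain ⟨hp, hpa, haq, hqr, hv⟩ := h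
  induction k with
  | zero => rw [topOnes_zero, if_neg (by omega), if_neg (by omega)]; simp
  | succ k ih =>
    have ih := ih (by omega)
    rw [topOnes_succ _ hk, hv]
    simp only [decide_eq_true_eq]
    split_ifs at ih ⊢ <;> omega

lemma ones_eq (h : IsSwapCol v a p q) : ones v = a := by
  have := h.topOnes_add le_rfl
  rw [topOnes_of_le _ le_rfl] at this
  obtain ⟨hp, hpa, haq, hqr, -⟩ := h
  split_ifs at this <;> omega

lemma deficit_eq (h : IsSwapCol v a p q) (k : ℕ) :
    deficit v k = if p ≤ k ∧ k < q then 1 else 0 := by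
  rw [deficit, h.ones_eq]
  rcases le_total k r with hk | hk
  · have := h.topOnes_add hk
    obtain ⟨hp, hpa, haq, hqr, -⟩ := h
    split_ifs at this ⊢ <;> omega
  · rw [topOnes_of_le _ hk, h.ones_eq]
    obtain ⟨hp, hpa, haq, hqr, -⟩ := h
    rw [if_neg (by omega)]
    omega

end IsSwapCol

lemma card_holes_eq_deficit {v : Fin r → Bool} {a : ℕ} (hv : ones v = a) (ha : a ≤ r) :
    (Finset.univ.filter fun x : Fin r => x.1 < a ∧ v x = false).card = deficit v a := by
  have h := Finset.card_filter_add_card_filter_not (fun x => v x = true)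
    (s := Finset.univ.filter fun x : Fin r => x.1 < a)
  rw [Fin.card_filter_val_lt, min_eq_right ha, Finset.filter_filter,
    Finset.filter_filter] at h
  simp only [Bool.not_eq_true] at h
  rw [deficit, hv, min_self, topOnes]
  omega

lemma card_beadsBelow_eq_deficit {v : Fin r → Bool} {a : ℕ} (hv : ones v = a) :
    (Finset.univ.filter fun x : Fin r => a ≤ x.1 ∧ v x = true).card = deficit v a := by
  have h := Finset.card_filter_add_card_filter_not (fun x : Fin r => x.1 < a)
    (s := Finset.univ.filter fun x : Fin r => v x = true)
  rw [Finset.filter_filter, Finset.filter_filter] at h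
  simp only [not_lt, and_comm (b := _ ≤ _), and_comm (b := _ < _)] at h
  have hv' : (Finset.univ.filter fun x : Fin r => v x = true).card = a := hv
  rw [deficit, hv, min_self, topOnes]
  omega

lemma eq_Ivec_or_isSwapCol {v : Fin r → Bool} {a : ℕ} (hv : ones v = a) (ha : a ≤ r)
    (hd : deficit v a ≤ 1) : v = Ivec r a ∨ ∃ p q, IsSwapCol v a p q := by
  set Z := Finset.univ.filter fun x : Fin r => x.1 < a ∧ v x = false
  set O := Finset.univ.filter fun x : Fin r => a ≤ x.1 ∧ v x = true
  have hZ1 : Z.card ≤ 1 := (card_holes_eq_deficit hv ha).trans_le hd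
  have hZO : O.card = Z.card :=
    (card_beadsBelow_eq_deficit hv).trans (card_holes_eq_deficit hv ha).symm
  rcases Nat.le_one_iff_eq_zero_or_eq_one.1 hZ1 with h0 | h1
  · left
    funext x
    have hxZ : x ∉ Z := by simp [Finset.card_eq_zero.1 h0]
    have hxO : x ∉ O := by simp [Finset.card_eq_zero.1 (hZO.trans h0)]
    simp only [Z, O, Finset.mem_filter, Finset.mem_univ, true_and] at hxZ hxO
    rw [Ivec]
    cases hx : v x <;> simp_all
  · right
    obtain ⟨z, hz⟩ := Finset.card_eq_one.1 h1
    obtain ⟨o, ho⟩ := Finset.card_eq_one.1 (hZO.trans h1)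
    have hzZ : z ∈ Z := hz ▸ Finset.mem_singleton_self z
    have hoO : o ∈ O := ho ▸ Finset.mem_singleton_self o
    simp only [Z, O, Finset.mem_filter, Finset.mem_univ, true_and] at hzZ hoO
    refine ⟨z.1 + 1, o.1 + 1, by omega, by omega, by omega, o.2, fun x => ?_⟩
    have hxZ : x ∈ Z ↔ x = z := by rw [hz, Finset.mem_singleton]
    have hxO : x ∈ O ↔ x = o := by rw [ho, Finset.mem_singleton]
    simp only [Z, O, Finset.mem_filter, Finset.mem_univ, true_and] at hxZ hxO
    have := o.2
    cases hx : v x <;> simp_all [Fin.ext_iff]; omega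

end Column

section Margins

variable {e r : ℕ}

def SameMargins (D D' : Fin r → Fin e → Bool) : Prop :=
  (∀ x, ones (D x) = ones (D' x)) ∧ ∀ c, ones (D · c) = ones (D' · c)

lemma sameMargins_equivalence : Equivalence (SameMargins (e := e) (r := r)) where
  refl _ := ⟨fun _ => rfl, fun _ => rfl⟩
  symm h := ⟨fun x => (h.1 x).symm, fun c => (h.2 c).symm⟩
  trans h h' := ⟨fun x => (h.1 x).trans (h'.1 x), fun c => (h.2 c).trans (h'.2 c)⟩

/-- A bead swap permutes the two rows it touches by `swap i j` and the two columns it touches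
by `swap s t`. -/
lemma BeadSwap.sameMargins {D D' : Fin r → Fin e → Bool} (h : BeadSwap D D') :
    SameMargins D D' := by
  obtain ⟨i, j, -, s, t, -, m1, m2, m3, m4, n1, n2, n3, n4, hoth⟩ := h
  constructor
  · intro x
    by_cases hx : x = s ∨ x = t
    · have : D' x = D x ∘ Equiv.swap i j := by
        funext c
        by_cases hc : c = i ∨ c = j
        · rcases hx with rfl | rfl <;> rcases hc with rfl | rfl <;>
            simp_all [Equiv.swap_apply_left, Equiv.swap_apply_right]
        · push Not at hc
          simp [Equiv.swap_apply_of_ne_of_ne hc.1 hc.2, hoth x c (Or.inr hc)]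
      rw [this, ones_comp_perm]
    · rw [show D' x = D x from funext fun c => hoth x c (Or.inl (not_or.1 hx))]
  · intro c
    by_cases hc : c = i ∨ c = j
    · have : (D' · c) = (D · c) ∘ Equiv.swap s t := by
        funext x
        by_cases hx : x = s ∨ x = t
        · rcases hx with rfl | rfl <;> rcases hc with rfl | rfl <;>
            simp_all [Equiv.swap_apply_left, Equiv.swap_apply_right]
        · push Not at hx
          simp [Equiv.swap_apply_of_ne_of_ne hx.1 hx.2, hoth x c (Or.inl hx)]
      rw [this, ones_comp_perm]
    · rw [show (D' · c) = (D · c) from funext fun x => hoth x c (Or.inr (not_or.1 hc))]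

lemma SameMargins.of_eqvGen {D D' : Fin r → Fin e → Bool}
    (h : Relation.EqvGen BeadSwap D D') : SameMargins D D' :=
  sameMargins_equivalence.eqvGen_iff.1
    (Relation.EqvGen.mono (fun _ _ => BeadSwap.sameMargins) _ _ h)

lemma SameMargins.permRows {D D' : Fin r → Fin e → Bool} (h : SameMargins D D')
    (σ : Equiv.Perm (Fin r)) :
    SameMargins (fun x c => D (σ x) c) (fun x c => D' (σ x) c) :=
  ⟨fun x => h.1 (σ x), fun c =>
    (ones_comp_perm (D · c) σ).trans ((h.2 c).trans (ones_comp_perm (D' · c) σ).symm)⟩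

lemma sum_deficit_add_sum_ones (D : Fin r → Fin e → Bool) (k : ℕ) :
    ∑ c, deficit (D · c) k + ∑ x ∈ Finset.univ.filter (fun x : Fin r => x.1 < k), ones (D x) =
      ∑ c, min (ones (D · c)) k := by
  have hcount : ∑ x ∈ Finset.univ.filter (fun x : Fin r => x.1 < k), ones (D x) =
      ∑ c, topOnes (D · c) k := by
    simp only [ones, topOnes, Finset.card_filter, Finset.sum_filter]
    rw [Finset.sum_comm (s := Finset.univ) (t := Finset.univ) (f := fun c (x : Fin r) => _)]
    refine Finset.sum_congr rfl fun x _ => ?_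
    split_ifs with hx <;> simp [hx]
  rw [hcount, ← Finset.sum_add_distrib]
  exact Finset.sum_congr rfl fun c _ => by rw [add_comm, topOnes_add_deficit]

lemma SameMargins.sum_deficit_eq {D D' : Fin r → Fin e → Bool} (h : SameMargins D D')
    (k : ℕ) : ∑ c, deficit (D · c) k = ∑ c, deficit (D' · c) k := by
  have hD := sum_deficit_add_sum_ones D k
  have hD' := sum_deficit_add_sum_ones D' k
  simp only [h.1, h.2] at hD
  omega

end Margins

section Intervals

variable {t : ℕ}

lemma existsUnique_Ico_of_monotone {j : Fin (t + 1) → ℕ} (hj : Monotone j) {k : ℕ}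
    (h0 : j 0 ≤ k) (hk : k < j (Fin.last t)) :
    ∃! u : Fin t, j u.castSucc ≤ k ∧ k < j u.succ := by
  refine existsUnique_of_exists_of_unique ?_ fun u u' hu hu' => ?_
  · induction t with
    | zero => exact absurd hk (not_lt.2 h0)
    | succ t ih =>
      by_cases hlast : j (Fin.last t).castSucc ≤ k
      · exact ⟨Fin.last t, hlast, by rwa [Fin.succ_last]⟩
      · obtain ⟨u, hu⟩ := ih (hj.comp Fin.strictMono_castSucc.monotone) h0 (not_le.1 hlast)
        exact ⟨u.castSucc, hu.1, by rw [Fin.succ_castSucc]; exact hu.2⟩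
  · by_contra hne
    rcases lt_or_gt_of_ne hne with h | h
    · have := hj (Fin.succ_le_castSucc_iff.2 h); omega
    · have := hj (Fin.succ_le_castSucc_iff.2 h); omega

variable {r : ℕ} {i p q : Fin t → ℕ}

lemma exists_consecutive_of_partition (hr : 2 ≤ r) (hi : StrictMono i)
    (hpi : ∀ u, p u ≤ i u) (hiq : ∀ u, i u < q u) (hp : ∀ u, 1 ≤ p u) (hq : ∀ u, q u ≤ r)
    (hcover : ∀ k, 1 ≤ k → k < r → ∃ u, p u ≤ k ∧ k < q u)
    (hdisj : ∀ u v k, p u ≤ k → k < q u → p v ≤ k → k < q v → u = v) :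
    ∃ j : Fin (t + 1) → ℕ, j 0 = 1 ∧ j (Fin.last t) = r ∧
      ∀ u, j u.castSucc = p u ∧ j u.succ = q u := by
  have hord : ∀ u v, u < v → q u ≤ p v := by
    intro u v huv
    by_contra! h
    have := hi huv
    have := hpi u; have := hpi v; have := hiq u; have := hiq v
    exact huv.ne (hdisj u v (max (p u) (p v)) (by omega) (by omega) (by omega) (by omega))
  have hfirst : ∀ u : Fin t, u.1 = 0 → p u = 1 := by
    intro u hu
    obtain ⟨v, hv⟩ := hcover 1 le_rfl (by omega)
    rcases eq_or_lt_of_le (show u ≤ v from Fin.le_def.2 (by omega)) with rfl | huv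
    · have := hp u; omega
    · have := hord u v huv; have := hp u; have := hiq u; have := hpi u; omega
  have hnext : ∀ u v : Fin t, u.1 + 1 = v.1 → q u = p v := by
    intro u v huv
    have := hord u v (Fin.lt_def.2 (by omega))
    have := hpi v; have := hiq v; have := hq v; have := hpi u; have := hiq u; have := hp u
    obtain ⟨w, hw⟩ := hcover (q u) (by omega) (by omega)
    rcases lt_trichotomy w u with hwu | rfl | hwu
    · have := hord w u hwu; omega
    · omega
    · rcases eq_or_lt_of_le (show v ≤ w from Fin.le_def.2 (by rw [Fin.lt_def] at hwu; omega))
        with rfl | hvw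
      · omega
      · have := hord v w hvw; omega
  have hlast : ∀ u : Fin t, u.1 + 1 = t → q u = r := by
    intro u hu
    by_contra hne
    have := hq u; have := hpi u; have := hiq u; have := hp u
    obtain ⟨w, hw⟩ := hcover (q u) (by omega) (by omega)
    rcases eq_or_lt_of_le (show w ≤ u from Fin.le_def.2 (by omega)) with rfl | hwu
    · omega
    · have := hord w u hwu; omega
  refine ⟨fun v => if h : v.1 < t then p ⟨v.1, h⟩ else r, ?_, by simp, fun u => ⟨by simp, ?_⟩⟩
  · obtain ⟨w, -⟩ := hcover 1 le_rfl (by omega)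
    have ht : 0 < t := Fin.pos w
    simp [ht, hfirst ⟨0, ht⟩ rfl]
  · simp only [Fin.val_succ]
    split_ifs with h
    · exact (hnext u _ rfl).symm
    · exact (hlast u (by omega)).symm

end Intervals

lemma LambdaMem.eq_of_mem {e r : ℕ} {Y : Fin r → Finset (Fin e)} (hY : LambdaMem r Y)
    {c : Fin e} {a b : Fin r} (ha : c ∈ Y a) (hb : c ∈ Y b) : a = b := by
  by_contra h
  exact Finset.disjoint_left.1 (hY.1 a b h) ha hb

/-- The margins shared by all matrices in `𝔑(Y, id)`. -/
def Balanced {e r : ℕ} (Y : Fin r → Finset (Fin e)) (D : Fin r → Fin e → Bool) : Prop :=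
  (∀ c a, c ∈ Y a → ones (D · c) = a.1) ∧ ∀ k, 1 ≤ k → k < r → ∑ c, deficit (D · c) k = 1

namespace Balanced

variable {e r : ℕ} {Y : Fin r → Finset (Fin e)} {D : Fin r → Fin e → Bool}

lemma of_sameMargins {D' : Fin r → Fin e → Bool} (hD : Balanced Y D) (h : SameMargins D D') :
    Balanced Y D' :=
  ⟨fun c a hc => (h.2 c).symm.trans (hD.1 c a hc),
    fun k hk hkr => (h.sum_deficit_eq k).symm.trans (hD.2 k hk hkr)⟩

lemma deficit_le_one (hD : Balanced Y D) (c : Fin e) {k : ℕ} (hk : 1 ≤ k) (hkr : k < r) :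
    deficit (D · c) k ≤ 1 :=
  (Finset.single_le_sum (f := fun c => deficit (D · c) k) (fun _ _ => Nat.zero_le _)
    (Finset.mem_univ c)).trans_eq (hD.2 k hk hkr)

lemma existsUnique_deficit_eq_one (hD : Balanced Y D) {k : ℕ} (hk : 1 ≤ k) (hkr : k < r) :
    ∃! c, deficit (D · c) k = 1 := by
  rw [Fintype.existsUnique_iff_card_one, ← Nat.cast_id (Finset.card _), ← Finset.sum_boole]
  refine (Finset.sum_congr rfl fun c _ => ?_).trans (hD.2 k hk hkr)
  have := hD.deficit_le_one c hk hkr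
  split_ifs <;> omega

lemma eq_Ivec_or_isSwapCol (hD : Balanced Y D) {c : Fin e} {a : Fin r} (hc : c ∈ Y a) :
    (D · c) = Ivec r a ∨ ∃ p q, IsSwapCol (D · c) a p q := by
  refine _root_.AK.eq_Ivec_or_isSwapCol (hD.1 c a hc) a.2.le ?_
  rcases Nat.eq_zero_or_pos a.1 with h | h
  · simp [deficit, h]
  · exact hD.deficit_le_one c h a.2

lemma eq_of_isSwapCol (hD : Balanced Y D) {c c' : Fin e} {a p q p' q' : ℕ}
    (h : IsSwapCol (D · c) a p q) (h' : IsSwapCol (D · c') a p' q') : c = c' :=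
  (hD.existsUnique_deficit_eq_one (h.1.trans h.2.1) (h.2.2.1.trans_le h.2.2.2.1)).unique
    (by rw [h.deficit_eq, if_pos ⟨h.2.1, h.2.2.1⟩])
    (by rw [h'.deficit_eq, if_pos ⟨h'.2.1, h'.2.2.1⟩])

lemma exists_isSwapCol_of_deficit_eq_one (hY : LambdaMem r Y) (hD : Balanced Y D) {c : Fin e}
    {k : ℕ} (h : deficit (D · c) k = 1) : ∃ a p q, c ∈ Y a ∧ IsSwapCol (D · c) a p q := by
  obtain ⟨a, ha⟩ := hY.2.1 c
  rcases hD.eq_Ivec_or_isSwapCol ha with hI | ⟨p, q, hs⟩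
  · rw [hI, deficit_Ivec a.2.le] at h
    exact absurd h zero_ne_one
  · exact ⟨a, p, q, ha, hs⟩

lemma exists_swapCols (hY : LambdaMem r Y) (hD : Balanced Y D) :
    ∃ (t : ℕ) (lev : Fin t → Fin r) (col : Fin t → Fin e) (p q : Fin t → ℕ), StrictMono lev ∧
      (∀ u, col u ∈ Y (lev u) ∧ IsSwapCol (D · (col u)) (lev u) (p u) (q u)) ∧
      (∀ c a p' q', c ∈ Y a → IsSwapCol (D · c) a p' q' → c ∈ Set.range col) ∧
      (∀ k, 1 ≤ k → k < r → ∃ u, p u ≤ k ∧ k < q u) ∧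
      ∀ u v k, p u ≤ k → k < q u → p v ≤ k → k < q v → u = v := by
  set S := Finset.univ.filter fun a : Fin r => ∃ c p q, c ∈ Y a ∧ IsSwapCol (D · c) a p q
  set lev := S.orderEmbOfFin rfl
  choose col p q hcol using fun u => (Finset.mem_filter.1 (S.orderEmbOfFin_mem rfl u)).2
  have hrange : ∀ c a p' q', c ∈ Y a → IsSwapCol (D · c) a p' q' → c ∈ Set.range col := by
    intro c a p' q' hc h
    obtain ⟨u, rfl⟩ : a ∈ Set.range lev := by
      rw [Finset.range_orderEmbOfFin]
      exact Finset.mem_filter.2 ⟨Finset.mem_univ a, c, p', q', hc, h⟩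
    exact ⟨u, hD.eq_of_isSwapCol (hcol u).2 h⟩
  refine ⟨S.card, lev, col, p, q, lev.strictMono, hcol, hrange, fun k hk hkr => ?_,
    fun u v k hpu hqu hpv hqv => ?_⟩
  · obtain ⟨c, hc, -⟩ := hD.existsUnique_deficit_eq_one hk hkr
    obtain ⟨a, p', q', ha, hs⟩ := hD.exists_isSwapCol_of_deficit_eq_one hY hc
    obtain ⟨u, rfl⟩ := hrange c a p' q' ha hs
    rw [(hcol u).2.deficit_eq] at hc
    split_ifs at hc with hku
    exact ⟨u, hku⟩
  · have hu := (hcol u).2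
    have hv := (hcol v).2
    have hcuv : col u = col v :=
      (hD.existsUnique_deficit_eq_one (hu.1.trans hpu) (hqu.trans_le hu.2.2.2.1)).unique
        (by rw [hu.deficit_eq, if_pos ⟨hpu, hqu⟩]) (by rw [hv.deficit_eq, if_pos ⟨hpv, hqv⟩])
    exact lev.injective (hY.eq_of_mem (hcol u).1 (hcuv ▸ (hcol v).1))

end Balanced

section DeltaM

variable {e r t : ℕ} {Y : Fin r → Finset (Fin e)}

lemma Yat_val (Y : Fin r → Finset (Fin e)) (a : Fin r) : Yat r Y a = Y a := dif_pos a.2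

lemma exists_mem_of_getElem?_sort {a n : ℕ} {c : Fin e}
    (h : ((Yat r Y a).sort (· ≤ ·))[n]? = some c) : ∃ ha : a < r, c ∈ Y ⟨a, ha⟩ := by
  have hc := (Finset.mem_sort _).1 (List.mem_of_getElem? h)
  unfold Yat at hc
  split_ifs at hc with ha
  · exact ⟨ha, hc⟩
  · simp at hc

lemma cvec_apply {iseq : Fin t → ℕ} {jseq : Fin (t + 1) → ℕ} {u : Fin t}
    (h1 : jseq u.castSucc ≤ iseq u) (h2 : iseq u < jseq u.succ) (x : Fin r) :
    cvec r iseq jseq u x =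
      decide ((x.1 + 1 ≤ iseq u ∧ x.1 + 1 ≠ jseq u.castSucc) ∨ x.1 + 1 = jseq u.succ) := by
  unfold cvec
  split_ifs <;> simp only [decide_eq_decide] <;> omega

variable {iseq : Fin t → ℕ} {jseq : Fin (t + 1) → ℕ} {w : Fin t → ℕ} {sc : Fin t → Fin e}

lemma injective_of_getElem?_sort (hY : LambdaMem r Y) (hi : Function.Injective iseq)
    (hsc : ∀ u, ((Yat r Y (iseq u)).sort (· ≤ ·))[w u - 1]? = some (sc u)) :
    Function.Injective sc := by
  intro u v huv
  obtain ⟨hu, hu'⟩ := exists_mem_of_getElem?_sort (hsc u)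
  obtain ⟨hv, hv'⟩ := exists_mem_of_getElem?_sort (hsc v)
  exact hi (Fin.mk.inj_iff.1 (hY.eq_of_mem hu' (huv ▸ hv')))

lemma DeltaM_apply_of_getElem?_sort (hY : LambdaMem r Y) (hi : Function.Injective iseq)
    (hsc : ∀ u, ((Yat r Y (iseq u)).sort (· ≤ ·))[w u - 1]? = some (sc u)) (u : Fin t)
    (x : Fin r) : DeltaM r Y iseq jseq w x (sc u) = cvec r iseq jseq u x := by
  have hex : ∃ u', ((Yat r Y (iseq u')).sort (· ≤ ·))[w u' - 1]? = some (sc u) := ⟨u, hsc u⟩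
  have hchoose := Classical.choose_spec hex
  rw [hsc] at hchoose
  unfold DeltaM
  rw [dif_pos hex, injective_of_getElem?_sort hY hi hsc (Option.some_injective _ hchoose)]

lemma DeltaM_apply_of_notMem_range (hY : LambdaMem r Y)
    (hsc : ∀ u, ((Yat r Y (iseq u)).sort (· ≤ ·))[w u - 1]? = some (sc u)) {c : Fin e}
    (hc : c ∉ Set.range sc) {a : Fin r} (ha : c ∈ Y a) (x : Fin r) :
    DeltaM r Y iseq jseq w x c = Ivec r a x := by
  have hnex : ¬ ∃ u, ((Yat r Y (iseq u)).sort (· ≤ ·))[w u - 1]? = some c :=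
    fun ⟨u, hu⟩ => hc ⟨u, Option.some_injective _ ((hsc u).symm.trans hu)⟩
  have hex : ∃ b, c ∈ Y b := ⟨a, ha⟩
  unfold DeltaM
  rw [dif_neg hnex, dif_pos hex, hY.eq_of_mem (Classical.choose_spec hex) ha]

end DeltaM

section Nset

variable {e r t : ℕ} {Y : Fin r → Finset (Fin e)} {y : ℕ → ℕ}
  {iseq : Fin t → ℕ} {jseq : Fin (t + 1) → ℕ} {w : Fin t → ℕ}

namespace PtPairCond

lemma strictMono_jseq (h : PtPairCond r t y iseq jseq) : StrictMono jseq :=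
  Fin.strictMono_iff_lt_succ.2 fun u => (h.2.2.1 u).trans_lt (h.2.2.2.1 u)

lemma strictMono_iseq (h : PtPairCond r t y iseq jseq) : StrictMono iseq :=
  fun u v huv => (h.2.2.2.1 u).trans_le
    ((h.strictMono_jseq.monotone (Fin.succ_le_castSucc_iff.2 huv)).trans (h.2.2.1 v))

lemma isSwapCol_cvec (h : PtPairCond r t y iseq jseq) (u : Fin t) :
    IsSwapCol (cvec r iseq jseq u) (iseq u) (jseq u.castSucc) (jseq u.succ) :=
  ⟨h.1 ▸ h.strictMono_jseq.monotone (Fin.zero_le _), h.2.2.1 u, h.2.2.2.1 u,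
    h.2.1 ▸ h.strictMono_jseq.monotone (Fin.le_last _), cvec_apply (h.2.2.1 u) (h.2.2.2.1 u)⟩

end PtPairCond

lemma balanced_DeltaM (hY : LambdaMem r Y)
    (hcond : PtPairCond r t (fun a => (Yat r Y a).card) iseq jseq)
    (hw : ∀ u, 1 ≤ w u ∧ w u ≤ (Yat r Y (iseq u)).card) :
    Balanced Y (DeltaM r Y iseq jseq w) := by
  have hi := hcond.strictMono_iseq.injective
  have hlen : ∀ u, w u - 1 < ((Yat r Y (iseq u)).sort (· ≤ ·)).length := by
    intro u
    rw [Finset.length_sort]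
    have := hw u
    omega
  set sc : Fin t → Fin e := fun u => ((Yat r Y (iseq u)).sort (· ≤ ·))[w u - 1]'(hlen u)
  have hsc : ∀ u, ((Yat r Y (iseq u)).sort (· ≤ ·))[w u - 1]? = some (sc u) :=
    fun u => List.getElem?_eq_getElem (hlen u)
  have hcol : ∀ u, IsSwapCol (DeltaM r Y iseq jseq w · (sc u)) (iseq u) (jseq u.castSucc)
      (jseq u.succ) := fun u =>
    (funext (DeltaM_apply_of_getElem?_sort hY hi hsc u)).symm ▸ hcond.isSwapCol_cvec u
  have hIvec : ∀ c ∉ Set.range sc, ∀ a, c ∈ Y a → (DeltaM r Y iseq jseq w · c) = Ivec r a :=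
    fun c hc a ha => funext (DeltaM_apply_of_notMem_range hY hsc hc ha)
  refine ⟨fun c a hca => ?_, fun k hk hkr => ?_⟩
  · by_cases hc : c ∈ Set.range sc
    · obtain ⟨u, rfl⟩ := hc
      obtain ⟨hu, hu'⟩ := exists_mem_of_getElem?_sort (hsc u)
      rw [(hcol u).ones_eq, hY.eq_of_mem hca hu']
    · rw [hIvec c hc a hca, ones_Ivec a.2.le]
  · calc ∑ c, deficit (DeltaM r Y iseq jseq w · c) k
        = ∑ u, deficit (DeltaM r Y iseq jseq w · (sc u)) k := by
          refine (Fintype.sum_of_injective sc (injective_of_getElem?_sort hY hi hsc) _ _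
            (fun c hc => ?_) fun u => rfl).symm
          obtain ⟨a, ha⟩ := hY.2.1 c
          rw [hIvec c hc a ha, deficit_Ivec a.2.le]
      _ = ∑ u : Fin t, if jseq u.castSucc ≤ k ∧ k < jseq u.succ then 1 else 0 := by
          simp only [(hcol _).deficit_eq]
      _ = 1 := by
          rw [Finset.sum_boole, Nat.cast_id, ← Fintype.existsUnique_iff_card_one]
          exact existsUnique_Ico_of_monotone hcond.strictMono_jseq.monotone
            (hcond.1.symm ▸ hk) (hcond.2.1.symm ▸ hkr)

lemma exists_DeltaM_of_balanced {D : Fin r → Fin e → Bool} (hr : 2 ≤ r) (hY : LambdaMem r Y)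
    (hD : Balanced Y D) :
    ∃ t, 1 ≤ t ∧ t ≤ r - 1 ∧
      ∃ (iseq : Fin t → ℕ) (jseq : Fin (t + 1) → ℕ) (w : Fin t → ℕ),
        PtPairCond r t (fun a => (Yat r Y a).card) iseq jseq ∧
        (∀ u, 1 ≤ w u ∧ w u ≤ (Yat r Y (iseq u)).card) ∧ D = DeltaM r Y iseq jseq w := by
  obtain ⟨t, lev, col, p, q, hlev, hcol, hrange, hcover, hdisj⟩ := hD.exists_swapCols hY
  have hiseq : StrictMono fun u => (lev u : ℕ) := hlev
  obtain ⟨jseq, hj0, hjl, hj⟩ := exists_consecutive_of_partition hr hiseq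
    (fun u => (hcol u).2.2.1) (fun u => (hcol u).2.2.2.1) (fun u => (hcol u).2.1)
    (fun u => (hcol u).2.2.2.2.1) hcover hdisj
  have hmem : ∀ u, col u ∈ (Yat r Y (lev u)).sort (· ≤ ·) := fun u => by
    rw [Finset.mem_sort, Yat_val]
    exact (hcol u).1
  obtain ⟨w, hw⟩ : ∃ w : Fin t → ℕ, ∀ u, w u = ((Yat r Y (lev u)).sort (· ≤ ·)).idxOf (col u) + 1 :=
    ⟨_, fun _ => rfl⟩
  have hsc : ∀ u, ((Yat r Y (lev u)).sort (· ≤ ·))[w u - 1]? = some (col u) := fun u => by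
    rw [hw, Nat.add_sub_cancel]
    exact List.getElem?_idxOf (hmem u)
  obtain ⟨u₁, -⟩ := hcover 1 le_rfl (by omega)
  refine ⟨t, Fin.pos u₁, ?_, fun u => lev u, jseq, w,
    ⟨hj0, hjl, fun u => (hj u).1 ▸ (hcol u).2.2.1, fun u => (hj u).2 ▸ (hcol u).2.2.2.1,
      fun u => Finset.card_pos.2 ⟨_, (Finset.mem_sort _).1 (hmem u)⟩⟩,
    fun u => ⟨by rw [hw]; omega, ?_⟩, ?_⟩
  · refine Fin.le_of_injective (fun u => ⟨lev u - 1, by have := (lev u).2; omega⟩) fun u v h => ?_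
    have := (hcol u).2.1; have := (hcol u).2.2.1; have := (hcol v).2.1; have := (hcol v).2.2.1
    exact hiseq.injective (by simp only [Fin.mk.injEq] at h; omega)
  · rw [hw, Nat.add_one_le_iff, ← Finset.length_sort (· ≤ ·)]
    exact List.idxOf_lt_length_iff.2 (hmem u)
  · funext x c
    by_cases hc : c ∈ Set.range col
    · obtain ⟨u, rfl⟩ := hc
      rw [DeltaM_apply_of_getElem?_sort hY hiseq.injective hsc,
        cvec_apply ((hj u).1 ▸ (hcol u).2.2.1) ((hj u).2 ▸ (hcol u).2.2.2.1), (hj u).1, (hj u).2]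
      exact (hcol u).2.2.2.2.2 x
    · obtain ⟨a, ha⟩ := hY.2.1 c
      rw [DeltaM_apply_of_notMem_range hY hsc hc ha]
      rcases hD.eq_Ivec_or_isSwapCol ha with h | ⟨p', q', h⟩
      · exact congrFun h x
      · exact absurd (hrange c a p' q' ha h) hc

theorem mem_Nset_iff_balanced (hr : 2 ≤ r) (hY : LambdaMem r Y) (π : Equiv.Perm (Fin r))
    (M : Fin r → Fin e → Bool) : M ∈ Nset r Y π ↔ Balanced Y (fun s c => M (π.symm s) c) := by
  constructor
  · rintro ⟨t, -, -, iseq, jseq, w, hcond, hw, rfl⟩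
    simpa using balanced_DeltaM hY hcond hw
  · intro hD
    obtain ⟨t, ht, htr, iseq, jseq, w, hcond, hw, hM⟩ := exists_DeltaM_of_balanced hr hY hD
    refine ⟨t, ht, htr, iseq, jseq, w, hcond, hw, funext fun s => funext fun c => ?_⟩
    simpa using congrFun (congrFun hM (π s)) c

end Nset

theorem Nset_closed_under_beadSwap_general (e r : ℕ) (hr : 2 ≤ r)
    (Y : Fin r → Finset (Fin e)) (hY : LambdaMem r Y)
    (π : Equiv.Perm (Fin r))
    (M : Fin r → Fin e → Bool) (hM : M ∈ Nset r Y π)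
    (L : Fin r → Fin e → Bool) (hL : Relation.EqvGen BeadSwap M L) :
    L ∈ Nset r Y π := by
  rw [mem_Nset_iff_balanced hr hY] at hM ⊢
  exact hM.of_sameMargins ((SameMargins.of_eqvGen hL).permRows π.symm)

/-- `𝔑(Y,π)` is closed under bead-swap equivalence. -/
theorem Nset_closed_under_beadSwap (e r : ℕ) (he : 2 ≤ e) (hr : 2 ≤ r)
    (Y : Fin r → Finset (Fin e)) (hY : LambdaMem r Y)
    (π : Equiv.Perm (Fin r))
    (M : Fin r → Fin e → Bool) (hM : M ∈ Nset r Y π)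
    (L : Fin r → Fin e → Bool) (hL : Relation.EqvGen BeadSwap M L) :
    L ∈ Nset r Y π :=
  Nset_closed_under_beadSwap_general e r hr Y hY π M hM L hL

end
end AK
end

section
/- Let e ≥ 2, r ≥ 1, let L ∈ M(r,e), let m ≥ 0, i_1,…,i_m ∈ {1,…,e−1} and k_1,…,k_m > 0, and suppose that in the free ℤ[v,v^{−1}]-module with basis M(r,e) one has G^{(k_m)}_{i_m} ⋯ G^{(k_1)}_{i_1}[L] = Σ_{M ∈ M(r,e)} a_M(v) [M] with a_M(v) ∈ ℕ[v,v^{−1}]. Fix a position 0 ≤ p ≤ e and let c be either the all-zeros or the all-ones column of length r; for K ∈ M(r,e) let K̄ ∈ M(r,e+1) be the matrix obtained by inserting the column c into K at position p. Then there exist m̄ ≥ 0, indices ī_1,…,ī_{m̄} ∈ {1,…,e} and integers k̄_1,…,k̄_{m̄} > 0 such that G^{(k̄_{m̄})}_{ī_{m̄}} ⋯ G^{(k̄_1)}_{ī_1}[L̄] = Σ_{M ∈ M(r,e)} a_M(v) [M̄]. -/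
/-!
Read `G^{(k)}_i` as the operator that moves `k` ones from column `i - 1` to column `i`, weighted
by `v^N`. After a constant column is inserted at `p`, a move between two columns on the same side
of `p` is the same move between the shifted columns. The move from column `p - 1` to column `p`
now straddles the new column and is relayed through it: when the column is zero, first into it
and then out of it; when it is all ones, first out of it and then into it. Only the rows moved
by the first step are eligible for the second, so exactly the original `k`-sets of rows survive,
and the exponents add up because `N`, summed row by row, is a difference of entries of the two
columns. The all-ones case is the all-zeros case for the complementary matrix: complementing
turns a move from `x` to `y` into a move from `y` to `x` with the same exponent.
-/

open scoped Classical

namespace AK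
noncomputable section



/-! ### The operators `G^{(k)}_i` on the free `ℤ[v,v⁻¹]`-module with basis `M(r,e)` -/

/-- The column `i - 1`. -/
def colPred {e : ℕ} (i : Fin e) : Fin e :=
  ⟨i.1 - 1, Nat.lt_of_le_of_lt (Nat.sub_le _ _) i.isLt⟩

/-- `L →(i,k) M`: move `k` ones from column `i-1` to column `i`. -/
def GArrow {e r : ℕ} (i : Fin e) (k : ℕ) (L M : Fin r → Fin e → Bool) : Prop :=
  ∃ S : Finset (Fin r), S.card = k ∧
    (∀ s ∈ S, L s (colPred i) = true ∧ L s i = false) ∧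
    M = fun s c => if s ∈ S ∧ (c = colPred i ∨ c = i) then !(L s c) else L s c

/-- `N_i(L,M)` for `L →(i,k) M`. -/
def Nval {e r : ℕ} (i : Fin e) (L M : Fin r → Fin e → Bool) : ℤ :=
  ∑ a ∈ Finset.univ.filter (fun a : Fin r => ¬(L a i = M a i)),
    (((Finset.univ.filter
        (fun s : Fin r => a < s ∧ M s (colPred i) = true ∧ M s i = false)).card : ℤ)
      - ((Finset.univ.filter
        (fun s : Fin r => a < s ∧ L s (colPred i) = false ∧ L s i = true)).card : ℤ))

/-- The free `ℤ[v,v⁻¹]`-module on the set of `r × e` matrices. -/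
abbrev FM (r e : ℕ) := (Fin r → Fin e → Bool) →₀ LaurentPolynomial ℤ

/-- The operator `G^{(k)}_i`. -/
def Gop {e r : ℕ} (i : Fin e) (k : ℕ) (f : FM r e) : FM r e :=
  f.sum fun L c =>
    ∑ M ∈ Finset.univ.filter (fun M => GArrow i k L M),
      Finsupp.single M (c * LaurentPolynomial.T (Nval i L M))

/-- `G^{(k_m)}_{i_m} ⋯ G^{(k_1)}_{i_1}`, applied in order of the list. -/
def GopList {e r : ℕ} (ops : List (Fin e × ℕ)) (f : FM r e) : FM r e :=
  ops.foldl (fun g p => Gop p.1 p.2 g) f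

/-- Membership in `ℕ[v, v⁻¹]` (nonnegative Laurent polynomials). -/
def IsNNLaurent (a : LaurentPolynomial ℤ) : Prop :=
  ∃ f : ℤ →₀ ℕ, a = f.sum fun n c => (c : LaurentPolynomial ℤ) * LaurentPolynomial.T n

/-- Membership in `v·ℕ[v]`. -/
def IsVNPoly (a : LaurentPolynomial ℤ) : Prop :=
  ∃ f : ℤ →₀ ℕ, (∀ n ∈ f.support, 1 ≤ n) ∧
    a = f.sum fun n c => (c : LaurentPolynomial ℤ) * LaurentPolynomial.T n

/-- Insert a constant column `b` into `K` at position `p`. -/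
def insertCol {e r : ℕ} (p : ℕ) (b : Bool) (K : Fin r → Fin e → Bool) :
    Fin r → Fin (e + 1) → Bool :=
  fun s c =>
    if c.1 < p then (if h2 : c.1 < e then K s ⟨c.1, h2⟩ else false)
    else if c.1 = p then b
    else if h3 : c.1 - 1 < e then K s ⟨c.1 - 1, h3⟩ else false

section Move

open Finset LaurentPolynomial

variable {e r : ℕ}

def movable (x y : Fin e) (L : Fin r → Fin e → Bool) : Finset (Fin r) :=
  univ.filter fun s => L s x = true ∧ L s y = false

@[simp]
lemma mem_movable {x y : Fin e} {L : Fin r → Fin e → Bool} {s : Fin r} :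
    s ∈ movable x y L ↔ L s x = true ∧ L s y = false := by
  simp [movable]

def moveRows (x y : Fin e) (S : Finset (Fin r)) (L : Fin r → Fin e → Bool) :
    Fin r → Fin e → Bool :=
  fun s c => if s ∈ S ∧ (c = x ∨ c = y) then !(L s c) else L s c

/-- The exponent `N` of a move of the rows `S`, summed row by row (see `Nval_moveRows`). -/
def moveExp (x y : Fin e) (L : Fin r → Fin e → Bool) (S : Finset (Fin r)) : ℤ :=
  ∑ a ∈ S, ∑ s ∈ univ.filter (fun s => a < s ∧ s ∉ S), ((L s x).toNat - (L s y).toNat : ℤ)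

def moveVec (x y : Fin e) (k : ℕ) (L : Fin r → Fin e → Bool) : FM r e :=
  ∑ S ∈ (movable x y L).powersetCard k, Finsupp.single (moveRows x y S L) (T (moveExp x y L S))

def moveOp (x y : Fin e) (k : ℕ) : FM r e →ₗ[LaurentPolynomial ℤ] FM r e :=
  Finsupp.linearCombination _ (moveVec x y k)

lemma moveOp_single (x y : Fin e) (k : ℕ) (L : Fin r → Fin e → Bool) (c : LaurentPolynomial ℤ) :
    moveOp x y k (Finsupp.single L c) = c • moveVec x y k L :=
  Finsupp.linearCombination_single _ _ _

lemma moveRows_injOn (x y : Fin e) (k : ℕ) (L : Fin r → Fin e → Bool) :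
    Set.InjOn (moveRows x y · L) ((movable x y L).powersetCard k) := by
  intro S hS S' hS' h
  rw [mem_coe, mem_powersetCard] at hS hS'
  ext s
  have hs := congrFun (congrFun h s) y
  have hSy : ∀ T ⊆ movable x y L, s ∈ T → L s y = false := fun T hT hsT =>
    (mem_movable.1 (hT hsT)).2
  by_cases h1 : s ∈ S <;> by_cases h2 : s ∈ S' <;>
    simp_all [moveRows]

lemma Nval_moveRows (i : Fin e) (L : Fin r → Fin e → Bool) {S : Finset (Fin r)}
    (hS : S ⊆ movable (colPred i) i L) :
    Nval i L (moveRows (colPred i) i S L) = moveExp (colPred i) i L S := by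
  have hL : ∀ s ∈ S, L s (colPred i) = true ∧ L s i = false := fun s hs =>
    mem_movable.1 (hS hs)
  have hrows : univ.filter (fun a => ¬L a i = moveRows (colPred i) i S L a i) = S := by
    ext a
    by_cases ha : a ∈ S <;> simp [moveRows, ha]
  rw [Nval, hrows, moveExp]
  refine sum_congr rfl fun a _ => ?_
  simp only [card_filter, sum_filter]
  push_cast
  rw [← sum_sub_distrib]
  refine sum_congr rfl fun s _ => ?_
  by_cases hs : s ∈ S
  · simp [moveRows, hs, hL s hs]
  · simp only [moveRows, hs, false_and, if_false]
    cases L s (colPred i) <;> cases L s i <;> by_cases a < s <;> simp [*]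

lemma filter_GArrow_eq_image (i : Fin e) (k : ℕ) (L : Fin r → Fin e → Bool) :
    univ.filter (GArrow i k L) =
      ((movable (colPred i) i L).powersetCard k).image (moveRows (colPred i) i · L) := by
  ext M
  simp only [mem_filter, mem_univ, true_and, mem_image, mem_powersetCard, GArrow]
  constructor
  · rintro ⟨S, hk, hS, rfl⟩
    exact ⟨S, ⟨fun s hs => mem_movable.2 (hS s hs), hk⟩, rfl⟩
  · rintro ⟨S, ⟨hS, hk⟩, rfl⟩
    exact ⟨S, hk, fun s hs => mem_movable.1 (hS hs), rfl⟩

lemma Gop_eq_moveOp (i : Fin e) (k : ℕ) (f : FM r e) : Gop i k f = moveOp (colPred i) i k f := by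
  rw [Gop, moveOp, Finsupp.linearCombination_apply]
  refine Finsupp.sum_congr fun L _ => ?_
  rw [filter_GArrow_eq_image, sum_image (moveRows_injOn _ _ k L), moveVec, smul_sum]
  refine sum_congr rfl fun S hS => ?_
  rw [Nval_moveRows i L (mem_powersetCard.1 hS).1, Finsupp.smul_single, smul_eq_mul]

lemma moveExp_moveRows (u v x y : Fin e) (L : Fin r → Fin e → Bool) (S : Finset (Fin r)) :
    moveExp u v (moveRows x y S L) S = moveExp u v L S := by
  refine sum_congr rfl fun a _ => sum_congr rfl fun s hs => ?_
  simp [moveRows, (mem_filter.1 hs).2.2]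

lemma moveExp_add (x y z : Fin e) (L : Fin r → Fin e → Bool) (S : Finset (Fin r)) :
    moveExp x z L S + moveExp z y L S = moveExp x y L S := by
  rw [moveExp, moveExp, moveExp, ← sum_add_distrib]
  refine sum_congr rfl fun a _ => ?_
  rw [← sum_add_distrib]
  exact sum_congr rfl fun s _ => by ring

lemma moveRows_moveRows {x y z : Fin e} (hxz : x ≠ z) (hyz : y ≠ z) (hxy : x ≠ y)
    (S : Finset (Fin r)) (L : Fin r → Fin e → Bool) :
    moveRows z y S (moveRows x z S L) = moveRows x y S L := by
  funext s c
  by_cases hs : s ∈ S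
  · by_cases hcx : c = x
    · subst hcx; simp [moveRows, hs, hxz, hxy]
    by_cases hcy : c = y
    · subst hcy; simp [moveRows, hs, hyz, hxy.symm]
    by_cases hcz : c = z
    · subst hcz; simp [moveRows, hs, hxz.symm, hyz.symm]
    simp [moveRows, hcx, hcy, hcz]
  · simp [moveRows, hs]

lemma moveOp_moveVec_of_col_false {x y z : Fin e} (hxz : x ≠ z) (hyz : y ≠ z) (hxy : x ≠ y)
    (k : ℕ) {L : Fin r → Fin e → Bool} (hz : ∀ s, L s z = false) :
    moveOp z y k (moveVec x z k L) = moveVec x y k L := by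
  have hrelay : ∀ S ∈ (movable x z L).powersetCard k,
      moveOp z y k (Finsupp.single (moveRows x z S L) (T (moveExp x z L S))) =
        if S ∈ (movable x y L).powersetCard k then
          Finsupp.single (moveRows x y S L) (T (moveExp x y L S)) else 0 := by
    intro S hS
    obtain ⟨hSxz, rfl⟩ := mem_powersetCard.1 hS
    have hmov : movable z y (moveRows x z S L) = S.filter (fun s => L s y = false) := by
      ext s
      by_cases hs : s ∈ S <;> simp [moveRows, hs, hz, hyz, hxy.symm]
    rw [moveOp_single, moveVec, hmov]
    by_cases hSxy : S ⊆ movable x y L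
    · have hfilter : S.filter (fun s => L s y = false) = S :=
        filter_true_of_mem fun s hs => (mem_movable.1 (hSxy hs)).2
      rw [if_pos (mem_powersetCard.2 ⟨hSxy, rfl⟩), hfilter, powersetCard_self, sum_singleton,
        Finsupp.smul_single, smul_eq_mul, ← T_add, moveExp_moveRows, moveExp_add,
        moveRows_moveRows hxz hyz hxy]
    · obtain ⟨s, hs, hsxy⟩ := not_subset.1 hSxy
      have hy : ¬L s y = false := fun hy => hsxy (mem_movable.2 ⟨(mem_movable.1 (hSxz hs)).1, hy⟩)
      rw [if_neg fun h => hSxy (mem_powersetCard.1 h).1,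
        powersetCard_eq_empty.2 (card_lt_card (filter_ssubset.2 ⟨s, hs, hy⟩)), sum_empty, smul_zero]
  have hsub : movable x y L ⊆ movable x z L := fun s hs => by
    simpa [hz] using (mem_movable.1 hs).1
  rw [moveVec, map_sum, sum_congr rfl hrelay, sum_ite_mem,
    inter_eq_right.2 (powersetCard_mono hsub), moveVec]

def complMat (L : Fin r → Fin e → Bool) : Fin r → Fin e → Bool := fun s c => !L s c

lemma complMat_injective : Function.Injective (complMat (r := r) (e := e)) :=
  Function.Involutive.injective fun L => funext fun s => funext fun c => Bool.not_not (L s c)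

lemma moveVec_complMat (x y : Fin e) (k : ℕ) (L : Fin r → Fin e → Bool) :
    moveVec y x k (complMat L) = Finsupp.mapDomain complMat (moveVec x y k L) := by
  have hmov : movable y x (complMat L) = movable x y L := by
    ext s
    simp [complMat, and_comm]
  rw [moveVec, moveVec, hmov, Finsupp.mapDomain_finsetSum]
  refine sum_congr rfl fun S _ => ?_
  have hrows : moveRows y x S (complMat L) = complMat (moveRows x y S L) := by
    funext s c
    simp only [moveRows, complMat, or_comm (a := c = y)]
    split_ifs <;> rfl
  have hexp : moveExp y x (complMat L) S = moveExp x y L S :=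
    sum_congr rfl fun a _ => sum_congr rfl fun s _ => by
      simp only [complMat]
      cases L s x <;> cases L s y <;> rfl
  rw [Finsupp.mapDomain_single, hrows, hexp]

lemma moveOp_mapDomain {e' : ℕ} {x y : Fin e} {x' y' : Fin e'} {k : ℕ}
    {φ : (Fin r → Fin e → Bool) → Fin r → Fin e' → Bool}
    (hφ : ∀ L, moveVec x' y' k (φ L) = Finsupp.mapDomain φ (moveVec x y k L)) (f : FM r e) :
    moveOp x' y' k (Finsupp.mapDomain φ f) = Finsupp.mapDomain φ (moveOp x y k f) := by
  rw [moveOp, moveOp, Finsupp.linearCombination_mapDomain,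
    ← Finsupp.lmapDomain_apply (LaurentPolynomial ℤ) (LaurentPolynomial ℤ),
    Finsupp.apply_linearCombination]
  exact congrArg (Finsupp.linearCombination _ · f) (funext hφ)

lemma moveOp_moveVec_of_col_true {x y z : Fin e} (hxz : x ≠ z) (hyz : y ≠ z) (hxy : x ≠ y)
    (k : ℕ) {L : Fin r → Fin e → Bool} (hz : ∀ s, L s z = true) :
    moveOp x z k (moveVec z y k L) = moveVec x y k L := by
  apply Finsupp.mapDomain_injective complMat_injective
  rw [← moveOp_mapDomain (moveVec_complMat x z k), ← moveVec_complMat,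
    moveOp_moveVec_of_col_false hyz hxz hxy.symm k (by simp [complMat, hz]), moveVec_complMat]

end Move

section InsertCol

open Finset

variable {e r : ℕ}

lemma val_succAbove (p : Fin (e + 1)) (j : Fin e) :
    (p.succAbove j).val = if j.val < p.val then j.val else j.val + 1 := by
  rcases lt_or_ge j.castSucc p with h | h
  · rw [Fin.succAbove_of_castSucc_lt _ _ h, if_pos (show j.val < p.val from h)]; rfl
  · rw [Fin.succAbove_of_le_castSucc _ _ h, if_neg (not_lt.2 (show p.val ≤ j.val from h))]; rfl

lemma colPred_succAbove {p : Fin (e + 1)} {i : Fin e} (hip : i.val ≠ p.val) :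
    colPred (p.succAbove i) = p.succAbove (colPred i) := by
  ext
  simp only [colPred, val_succAbove]
  split_ifs <;> omega

lemma colPred_eq_succAbove_colPred {p : Fin (e + 1)} {i : Fin e} (hi : i.val ≠ 0)
    (hip : i.val = p.val) :
    colPred p = p.succAbove (colPred i) := by
  ext
  simp only [colPred, val_succAbove]
  split_ifs <;> omega

lemma colPred_succAbove_of_eq {p : Fin (e + 1)} {i : Fin e} (hip : i.val = p.val) :
    colPred (p.succAbove i) = p := by
  ext
  simp only [colPred, val_succAbove]
  split_ifs <;> omega

lemma insertCol_succAbove (p : Fin (e + 1)) (b : Bool) (K : Fin r → Fin e → Bool) (s : Fin r)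
    (j : Fin e) : insertCol p b K s (p.succAbove j) = K s j := by
  simp only [insertCol, val_succAbove]
  split_ifs <;> first | omega | rfl

lemma insertCol_self (p : Fin (e + 1)) (b : Bool) (K : Fin r → Fin e → Bool) (s : Fin r) :
    insertCol p b K s p = b := by
  simp [insertCol]

lemma insertCol_injective (p : Fin (e + 1)) (b : Bool) :
    Function.Injective (insertCol (e := e) (r := r) p b) := fun K K' h =>
  funext fun s => funext fun j => by
    simpa only [insertCol_succAbove] using congrFun (congrFun h s) (p.succAbove j)

lemma moveVec_insertCol (p : Fin (e + 1)) (b : Bool) (x y : Fin e) (k : ℕ)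
    (L : Fin r → Fin e → Bool) :
    moveVec (p.succAbove x) (p.succAbove y) k (insertCol p b L) =
      Finsupp.mapDomain (insertCol p b) (moveVec x y k L) := by
  have hmov : movable (p.succAbove x) (p.succAbove y) (insertCol p b L) = movable x y L := by
    ext s
    simp [insertCol_succAbove]
  rw [moveVec, moveVec, hmov, Finsupp.mapDomain_finsetSum]
  refine sum_congr rfl fun S _ => ?_
  have hrows : moveRows (p.succAbove x) (p.succAbove y) S (insertCol p b L) =
      insertCol p b (moveRows x y S L) := by
    funext s c
    rcases Fin.eq_self_or_eq_succAbove p c with rfl | ⟨j, rfl⟩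
    · simp [moveRows, insertCol_self, Fin.ne_succAbove]
    · simp [moveRows, insertCol_succAbove]
  have hexp : moveExp (p.succAbove x) (p.succAbove y) (insertCol p b L) S = moveExp x y L S := by
    simp [moveExp, insertCol_succAbove]
  rw [Finsupp.mapDomain_single, hrows, hexp]

end InsertCol

section Lift

variable {e r : ℕ}

lemma GopList_append (ops ops' : List (Fin e × ℕ)) (f : FM r e) :
    GopList (ops ++ ops') f = GopList ops' (GopList ops f) :=
  List.foldl_append

lemma GopList_add (ops : List (Fin e × ℕ)) (f g : FM r e) :
    GopList ops (f + g) = GopList ops f + GopList ops g := by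
  induction ops generalizing f g with
  | nil => rfl
  | cons q ops ih =>
    change GopList ops (Gop q.1 q.2 (f + g)) =
      GopList ops (Gop q.1 q.2 f) + GopList ops (Gop q.1 q.2 g)
    rw [Gop_eq_moveOp, map_add, ih, ← Gop_eq_moveOp, ← Gop_eq_moveOp]

lemma GopList_zero (ops : List (Fin e × ℕ)) : GopList ops (0 : FM r e) = 0 :=
  (AddMonoidHom.mk' (GopList ops) (GopList_add ops)).map_zero

def liftOp (p : Fin (e + 1)) (b : Bool) (q : Fin e × ℕ) : List (Fin (e + 1) × ℕ) :=
  if q.1.val = p.val then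
    if b then [(p.succAbove q.1, q.2), (p, q.2)] else [(p, q.2), (p.succAbove q.1, q.2)]
  else [(p.succAbove q.1, q.2)]

lemma liftOp_valid (p : Fin (e + 1)) (b : Bool) {q : Fin e × ℕ} (hq : q.1.val ≠ 0 ∧ 0 < q.2) :
    ∀ q' ∈ liftOp p b q, q'.1.val ≠ 0 ∧ 0 < q'.2 := by
  have hσ : p.succAbove q.1 ≠ 0 :=
    Fin.ne_of_val_ne (by rw [val_succAbove, Fin.val_zero]; split_ifs <;> omega)
  unfold liftOp
  by_cases hqp : q.1.val = p.val
  · have hp : p ≠ 0 := Fin.ne_of_val_ne (by rw [Fin.val_zero]; omega)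
    cases b <;> simp [hqp, hσ, hp, hq.2]
  · simp [hqp, hσ, hq.2]

lemma GopList_liftOp_single (p : Fin (e + 1)) (b : Bool) {q : Fin e × ℕ} (hq : q.1.val ≠ 0)
    (L : Fin r → Fin e → Bool) (c : LaurentPolynomial ℤ) :
    GopList (liftOp p b q) (Finsupp.single (insertCol p b L) c) =
      c • moveVec (p.succAbove (colPred q.1)) (p.succAbove q.1) q.2 (insertCol p b L) := by
  obtain ⟨i, k⟩ := q
  dsimp only at hq ⊢
  have hx : p.succAbove (colPred i) ≠ p := Fin.succAbove_ne p _
  have hy : p.succAbove i ≠ p := Fin.succAbove_ne p i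
  have hxy : p.succAbove (colPred i) ≠ p.succAbove i := fun h => hq <| by
    have := congrArg Fin.val (Fin.succAbove_right_injective h)
    simp [colPred] at this
    omega
  unfold liftOp
  split_ifs with hip hb
  · subst hb
    change Gop p k (Gop (p.succAbove i) k _) = _
    rw [Gop_eq_moveOp, Gop_eq_moveOp, colPred_succAbove_of_eq hip,
      colPred_eq_succAbove_colPred hq hip, moveOp_single, map_smul,
      moveOp_moveVec_of_col_true hx hy hxy k (insertCol_self p true L)]
  · rw [Bool.not_eq_true] at hb
    subst hb
    change Gop (p.succAbove i) k (Gop p k _) = _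
    rw [Gop_eq_moveOp, Gop_eq_moveOp, colPred_succAbove_of_eq hip,
      colPred_eq_succAbove_colPred hq hip, moveOp_single, map_smul,
      moveOp_moveVec_of_col_false hx hy hxy k (insertCol_self p false L)]
  · change Gop (p.succAbove i) k _ = _
    rw [Gop_eq_moveOp, colPred_succAbove hip, moveOp_single]

lemma GopList_liftOp (p : Fin (e + 1)) (b : Bool) {q : Fin e × ℕ} (hq : q.1.val ≠ 0)
    (f : FM r e) :
    GopList (liftOp p b q) (Finsupp.mapDomain (insertCol p b) f) =
      Finsupp.mapDomain (insertCol p b) (Gop q.1 q.2 f) := by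
  induction f using Finsupp.induction_linear with
  | zero => simp only [Finsupp.mapDomain_zero, GopList_zero, Gop_eq_moveOp, map_zero]
  | add f g hf hg =>
    rw [Finsupp.mapDomain_add, GopList_add, hf, hg, ← Finsupp.mapDomain_add]
    simp only [Gop_eq_moveOp, map_add]
  | single L c => rw [Finsupp.mapDomain_single, GopList_liftOp_single p b hq, Gop_eq_moveOp,
      moveOp_single, Finsupp.mapDomain_smul, moveVec_insertCol]

lemma GopList_flatMap_liftOp (p : Fin (e + 1)) (b : Bool) (ops : List (Fin e × ℕ))
    (hops : ∀ q ∈ ops, q.1.val ≠ 0) (f : FM r e) :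
    GopList (ops.flatMap (liftOp p b)) (Finsupp.mapDomain (insertCol p b) f) =
      Finsupp.mapDomain (insertCol p b) (GopList ops f) := by
  induction ops generalizing f with
  | nil => rfl
  | cons q ops ih =>
    rw [List.flatMap_cons, GopList_append, GopList_liftOp p b (hops q List.mem_cons_self),
      ih (fun q' hq' => hops q' (List.mem_cons_of_mem q hq'))]
    rfl

end Lift

theorem ignore_constant_columns_general (e r : ℕ)
    (L : Fin r → Fin e → Bool)
    (ops : List (Fin e × ℕ)) (hops : ∀ q ∈ ops, q.1.1 ≠ 0 ∧ 0 < q.2)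
    (p : ℕ) (hp : p ≤ e) (b : Bool) :
    ∃ ops' : List (Fin (e + 1) × ℕ), (∀ q ∈ ops', q.1.1 ≠ 0 ∧ 0 < q.2) ∧
      (∀ M : Fin r → Fin e → Bool,
        GopList ops' (Finsupp.single (insertCol p b L) 1) (insertCol p b M)
          = GopList ops (Finsupp.single L 1) M) ∧
      (∀ M' : Fin r → Fin (e + 1) → Bool,
        (∀ M : Fin r → Fin e → Bool, M' ≠ insertCol p b M) →
          GopList ops' (Finsupp.single (insertCol p b L) 1) M' = 0) := by
  obtain ⟨p, rfl⟩ : ∃ p' : Fin (e + 1), p'.val = p := ⟨⟨p, Nat.lt_succ_of_le hp⟩, rfl⟩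
  have hlift := GopList_flatMap_liftOp p b ops (fun q hq => (hops q hq).1) (Finsupp.single L 1)
  rw [Finsupp.mapDomain_single] at hlift
  refine ⟨ops.flatMap (liftOp p b), fun q' hq' => ?_, fun M => ?_, fun M' hM' => ?_⟩
  · obtain ⟨q, hq, hq'⟩ := List.mem_flatMap.1 hq'
    exact liftOp_valid p b (hops q hq) q' hq'
  · rw [hlift, Finsupp.mapDomain_apply (insertCol_injective p b)]
  · rw [hlift]
    exact Finsupp.mapDomain_of_notMem_range _ _ fun ⟨M, hM⟩ => hM' M hM.symm

/-- Constant columns can be ignored when inducing. -/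
theorem ignore_constant_columns (e r : ℕ) (he : 2 ≤ e) (hr : 1 ≤ r)
    (L : Fin r → Fin e → Bool)
    (ops : List (Fin e × ℕ)) (hops : ∀ q ∈ ops, q.1.1 ≠ 0 ∧ 0 < q.2)
    (hNN : ∀ M : Fin r → Fin e → Bool,
      IsNNLaurent (GopList ops (Finsupp.single L 1) M))
    (p : ℕ) (hp : p ≤ e) (b : Bool) :
    ∃ ops' : List (Fin (e + 1) × ℕ), (∀ q ∈ ops', q.1.1 ≠ 0 ∧ 0 < q.2) ∧
      (∀ M : Fin r → Fin e → Bool,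
        GopList ops' (Finsupp.single (insertCol p b L) 1) (insertCol p b M)
          = GopList ops (Finsupp.single L 1) M) ∧
      (∀ M' : Fin r → Fin (e + 1) → Bool,
        (∀ M : Fin r → Fin e → Bool, M' ≠ insertCol p b M) →
          GopList ops' (Finsupp.single (insertCol p b L) 1) M' = 0) :=
  ignore_constant_columns_general e r L ops hops p hp b

end
end AK
end

section
/- Let e ≥ 2, r = 3, u ∈ {2,3}, with D^u as above, and identify each N ∈ D^u with the 3-multipartition Pt(0,N). Then the following dominance relations hold: (i) α^u_k ⊳ α^u_{k+1} for 1 ≤ k ≤ y and β^u_l ⊳ β^u_{l+1} for 1 ≤ l ≤ z; (ii) if i_k < j_l then α^u_k ⊳ β^u_l, and if j_l < i_k then β^u_l ⊳ α^u_k; (iii) γ^u_{k,l+1} ⊳ γ^u_{k,l} ⊳ γ^u_{k+1,l}, and if γ^u_{k,l} ⊵ γ^u_{k′,l′} then k ≤ k′; (iv) if γ^u_{k,l} ⊳ α^u_v then k ≤ v, and if α^u_v ⊳ γ^u_{k,l} then v ≤ k; (v) if γ^u_{k,l} ⊳ α^u_k then i_k < j_l, and if α^u_k ⊳ γ^u_{k,l}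 then j_l < i_k; (vi) if γ^u_{k,l} ⊳ β^u_w then i_k < j_w, and if β^u_w ⊳ γ^u_{k,l} then j_w < i_k. -/
open scoped Classical

namespace AK
noncomputable section



/-! ### The families `α^u_k`, `β^u_l`, `γ^u_{kl}` for `r = 3` -/

def xcol : Fin 6 → Fin 3 → Bool := fun _ => ![false, false, false]

def ycol : Fin 6 → Fin 3 → Bool :=
  ![![false,true,true], ![true,false,false], ![true,true,false],
    ![false,false,true], ![false,true,true], ![true,false,false]]

def zcol : Fin 6 → Fin 3 → Bool :=
  ![![false,false,true], ![true,false,true], ![false,true,false],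
    ![true,false,true], ![false,true,false], ![true,true,false]]

def oycol : Fin 6 → Fin 3 → Bool :=
  ![![true,false,true], ![false,false,true], ![false,true,true],
    ![true,false,false], ![true,true,false], ![false,true,false]]

def ozcol : Fin 6 → Fin 3 → Bool :=
  ![![false,true,false], ![true,true,false], ![true,false,false],
    ![false,true,true], ![false,false,true], ![true,false,true]]

def aacol : Fin 6 → Fin 3 → Bool :=
  ![![true,true,false], ![false,true,false], ![true,false,true],
    ![false,true,false], ![true,false,true], ![false,false,true]]

def abcol : Fin 6 → Fin 3 → Bool :=
  ![![true,false,false], ![false,true,true], ![false,false,true],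
    ![true,true,false], ![true,false,false], ![false,true,true]]

variable {e : ℕ}

/-- The matrix `α^u_k`. -/
def alphaM (Y Z : Finset (Fin e)) {y : ℕ} (hY : Y.card = y + 1) (u : Fin 6)
    (k : Fin (y + 1)) : Fin 3 → Fin e → Bool :=
  fun s c =>
    if c = Y.orderEmbOfFin hY k then aacol u s
    else if c ∈ Y then ycol u s
    else if c ∈ Z then zcol u s
    else false

/-- The matrix `β^u_l`. -/
def betaM (Y Z : Finset (Fin e)) {z : ℕ} (hZ : Z.card = z + 1) (u : Fin 6)
    (l : Fin (z + 1)) : Fin 3 → Fin e → Bool :=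
  fun s c =>
    if c = Z.orderEmbOfFin hZ l then abcol u s
    else if c ∈ Z then zcol u s
    else if c ∈ Y then ycol u s
    else false

/-- The matrix `γ^u_{kl}`. -/
def gammaM (Y Z : Finset (Fin e)) {y z : ℕ} (hY : Y.card = y + 1) (hZ : Z.card = z + 1)
    (u : Fin 6) (k : Fin (y + 1)) (l : Fin (z + 1)) : Fin 3 → Fin e → Bool :=
  fun s c =>
    if c = Y.orderEmbOfFin hY k then oycol u s
    else if c = Z.orderEmbOfFin hZ l then ozcol u s
    else if c ∈ Y then ycol u s
    else if c ∈ Z then zcol u s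
    else false

/-- The set `D^u` of matrices in the block. -/
def Duset (Y Z : Finset (Fin e)) {y z : ℕ} (hY : Y.card = y + 1) (hZ : Z.card = z + 1)
    (u : Fin 6) : Set (Fin 3 → Fin e → Bool) :=
  {A | (∃ k, A = alphaM Y Z hY u k) ∨ (∃ l, A = betaM Y Z hZ u l) ∨
       (∃ k l, A = gammaM Y Z hY hZ u k l)}


/-! ### The dominance order on multipartitions -/

/-- The size of a partition. -/
def psize (f : ℕ → ℕ) : ℕ := ∑ᶠ x, f x

/-- The dominance order `μ ⊵ λ` on multipartitions. -/
def Dom {r : ℕ} (mu lam : Fin r → ℕ → ℕ) : Prop :=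
  ∀ (t : Fin r) (z : ℕ),
    (∑ s ∈ Finset.univ.filter (· < t), psize (lam s)) + (∑ x ∈ Finset.range z, lam t x) ≤
    (∑ s ∈ Finset.univ.filter (· < t), psize (mu s)) + (∑ x ∈ Finset.range z, mu t x)

/-- Strict dominance `μ ⊳ λ`. -/
def SDom {r : ℕ} (mu lam : Fin r → ℕ → ℕ) : Prop :=
  Dom mu lam ∧ mu ≠ lam

/-- The multipartition `Pt(0,M)`. -/
def Pt0 {e r : ℕ} (M : Fin r → Fin e → Bool) : Fin r → ℕ → ℕ :=
  PtPart (fun _ => 0) M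


/-!
For `B = 0` the `s`-th component of `Pt(0, M)` has β-set `Rₛ ∪ {-1, -2, …}`, where `Rₛ` is the set
of columns in row `s` of `M`, so its first `z` parts add up to the sum of the `z` largest elements
of that β-set plus a term depending only on `|Rₛ|` and `z`. All matrices of `D^u` have the same row
sizes, hence dominance among them amounts to comparing, for every row `t` and every `z ≤ |R_t|`,
the column sum of the rows before `t` plus the sum of the `z` largest columns of row `t`.

Each relation asserted in (i)–(iii) is a single bead exchange moving a larger column to an earlier
row and a smaller one to a later row; this raises all these sums weakly, and the one at the later
row with `z = 0` strictly. The remaining claims read off one such inequality: for `u = 2`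
(resp. `u = 3`) the column sum of row `0` (resp. rows `0` and `1`) of `α_k`, `β_l`, `γ_{kl}` is a
constant minus `i_k`, `j_l`, `i_k` respectively, while (v) compares the largest column of row `1`
(resp. the whole of row `0`).
-/

section BetaSets

variable {e r : ℕ}

def ofRows (R : Fin r → Finset (Fin e)) : Fin r → Fin e → Bool :=
  fun s c => decide (c ∈ R s)

/-- `decEnum S` lists `S ∪ {-1, -2, …}` (columns read as integers) in decreasing order. -/
def decEnum (S : Finset (Fin e)) (x : ℕ) : ℤ :=
  if h : S.Nonempty then
    match x with
    | 0 => ((S.max' h : ℕ) : ℤ)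
    | x + 1 => decEnum (S.erase (S.max' h)) x
  else -(x + 1)
termination_by S.card
decreasing_by exact Finset.card_erase_lt_of_mem (S.max'_mem h)

lemma decEnum_empty (x : ℕ) : decEnum (∅ : Finset (Fin e)) x = -(x + 1) := by
  rw [decEnum]; simp

lemma decEnum_zero {S : Finset (Fin e)} (h : S.Nonempty) : decEnum S 0 = ((S.max' h : ℕ) : ℤ) := by
  rw [decEnum]; simp [h]

lemma decEnum_succ {S : Finset (Fin e)} (h : S.Nonempty) (x : ℕ) :
    decEnum S (x + 1) = decEnum (S.erase (S.max' h)) x := by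
  rw [decEnum]; simp [h]

lemma decEnum_strictAnti (S : Finset (Fin e)) : StrictAnti (decEnum S) := by
  refine strictAnti_nat_of_succ_lt fun x => ?_
  induction S using Finset.strongInduction generalizing x with
  | H S ih =>
    rcases S.eq_empty_or_nonempty with rfl | h
    · simp only [decEnum_empty]; omega
    rw [decEnum_succ h]
    cases x with
    | zero =>
      rw [decEnum_zero h]
      rcases (S.erase (S.max' h)).eq_empty_or_nonempty with h' | h'
      · rw [h', decEnum_empty]; omega
      · rw [decEnum_zero h']
        exact_mod_cast S.lt_max'_of_mem_erase_max' h (Finset.max'_mem _ h')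
    | succ x =>
      rw [decEnum_succ h]
      exact ih _ (Finset.erase_ssubset (S.max'_mem h)) x

lemma decEnum_of_card_le {S : Finset (Fin e)} {x : ℕ} (hx : S.card ≤ x) :
    decEnum S x = S.card - 1 - x := by
  induction S using Finset.strongInduction generalizing x with
  | H S ih =>
    rcases S.eq_empty_or_nonempty with rfl | h
    · rw [decEnum_empty, Finset.card_empty, Nat.cast_zero]; ring
    have hm := S.max'_mem h
    obtain ⟨x, rfl⟩ : ∃ x', x = x' + 1 := Nat.exists_eq_succ_of_ne_zero (by
      have := h.card_pos; omega)
    rw [decEnum_succ h, ih _ (Finset.erase_ssubset hm)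
      (by rw [Finset.card_erase_of_mem hm]; omega), Finset.card_erase_of_mem hm,
      Nat.cast_sub h.card_pos]
    push_cast; ring

lemma sub_one_sub_le_decEnum {S : Finset (Fin e)} {x : ℕ} (hx : x < S.card) :
    (S.card : ℤ) - 1 - x ≤ decEnum S x := by
  have key : ∀ n, decEnum S (x + n) + n ≤ decEnum S x := by
    intro n
    induction n with
    | zero => simp
    | succ n ih =>
      have := decEnum_strictAnti S (show x + n < x + (n + 1) by omega)
      push_cast; omega
  have := key (S.card - x)
  rw [Nat.add_sub_cancel' hx.le, decEnum_of_card_le le_rfl] at this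
  push_cast [hx.le] at this; omega

lemma mem_range_decEnum {S : Finset (Fin e)} {w : ℤ} :
    w ∈ Set.range (decEnum S) ↔ w < 0 ∨ ∃ a ∈ S, ((a : ℕ) : ℤ) = w := by
  induction S using Finset.strongInduction with
  | H S ih =>
    rcases S.eq_empty_or_nonempty with rfl | h
    · simp only [Set.mem_range, decEnum_empty, Finset.notMem_empty, false_and, exists_false,
        or_false]
      exact ⟨by rintro ⟨x, rfl⟩; omega, fun hw => ⟨(-w - 1).toNat, by omega⟩⟩
    have hm := S.max'_mem h
    have hsplit : w ∈ Set.range (decEnum S) ↔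
        ((S.max' h : ℕ) : ℤ) = w ∨ w ∈ Set.range (decEnum (S.erase (S.max' h))) := by
      constructor
      · rintro ⟨_ | x, rfl⟩
        · exact .inl (decEnum_zero h).symm
        · exact .inr ⟨x, (decEnum_succ h x).symm⟩
      · rintro (rfl | ⟨x, rfl⟩)
        · exact ⟨0, decEnum_zero h⟩
        · exact ⟨x + 1, decEnum_succ h x⟩
    rw [hsplit, ih _ (Finset.erase_ssubset hm)]
    constructor
    · rintro (rfl | hw | ⟨a, ha, rfl⟩)
      exacts [.inr ⟨_, hm, rfl⟩, .inl hw, .inr ⟨a, Finset.mem_of_mem_erase ha, rfl⟩]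
    · rintro (hw | ⟨a, ha, rfl⟩)
      · exact .inr (.inl hw)
      by_cases hma : a = S.max' h
      · exact .inl (by rw [hma])
      · exact .inr (.inr ⟨a, Finset.mem_erase.2 ⟨hma, ha⟩, rfl⟩)

lemma tEnum_range {g : ℕ → ℤ} (hg : StrictAnti g) (x : ℕ) : tEnum (Set.range g) x = g x := by
  induction x with
  | zero =>
    exact IsGreatest.csSup_eq ⟨⟨0, rfl⟩, by rintro _ ⟨y, rfl⟩; exact hg.antitone (Nat.zero_le y)⟩
  | succ x ih =>
    change sSup (Set.range g ∩ Set.Iio (tEnum (Set.range g) x)) = g (x + 1)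
    rw [ih]
    refine IsGreatest.csSup_eq ⟨⟨⟨x + 1, rfl⟩, hg (Nat.lt_succ_self x)⟩, ?_⟩
    rintro _ ⟨⟨y, rfl⟩, hy⟩
    exact hg.antitone (Nat.succ_le_of_lt (hg.lt_iff_gt.mp hy))

lemma rank_const_zero (i : Fin e) : rank (fun _ => 0) i = i := by
  ext
  change (Finset.univ.filter fun j => prec (fun _ => (0 : ℕ)) j i).card = i
  rw [show (Finset.univ.filter fun j => prec (fun _ => (0 : ℕ)) j i) = Finset.Iio i by
    ext j; simp [prec], Fin.card_Iio]

lemma Tset_ofRows (R : Fin r → Finset (Fin e)) (s : Fin r) :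
    Tset (fun _ => 0) (ofRows R) s = Set.range (decEnum (R s)) := by
  ext w
  simp only [Tset, beads, rank_const_zero, ofRows, Set.mem_ofPred_eq, mem_range_decEnum, zero_add]
  rcases lt_or_ge w 0 with hw | hw
  · simp [hw]
  lift w to ℕ using hw
  simp only [Int.toNat_natCast, Nat.cast_nonneg, true_and, Nat.cast_inj,
    not_lt.2 (Int.natCast_nonneg w), false_or]
  constructor
  · rintro ⟨h, hw⟩
    split_ifs at hw with hmem
    · have hwe : w < e := by rwa [Nat.div_lt_iff_lt_mul (by omega), one_mul] at hw
      exact ⟨_, of_decide_eq_true hmem, Nat.mod_eq_of_lt hwe⟩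
    · exact absurd hw (Nat.not_lt_zero _)
  · rintro ⟨a, ha, rfl⟩
    refine ⟨Nat.mod_lt _ (by have := a.isLt; omega), ?_⟩
    simp [Nat.mod_eq_of_lt a.isLt, ha, Nat.div_eq_of_lt a.isLt]

end BetaSets

section TopSums

variable {e : ℕ}

def colSum (S : Finset (Fin e)) : ℤ := ∑ a ∈ S, ((a : ℕ) : ℤ)

lemma colSum_insert {S : Finset (Fin e)} {a : Fin e} (ha : a ∉ S) :
    colSum (insert a S) = (a : ℕ) + colSum S :=
  Finset.sum_insert ha

lemma colSum_erase {S : Finset (Fin e)} {a : Fin e} (ha : a ∈ S) :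
    colSum (S.erase a) = colSum S - (a : ℕ) :=
  Finset.sum_erase_eq_sub ha

def topSum (S : Finset (Fin e)) (z : ℕ) : ℤ := ∑ x ∈ Finset.range z, decEnum S x

lemma topSum_succ {S : Finset (Fin e)} (h : S.Nonempty) (z : ℕ) :
    topSum S (z + 1) = ((S.max' h : ℕ) : ℤ) + topSum (S.erase (S.max' h)) z := by
  simp only [topSum, Finset.sum_range_succ', decEnum_zero h, decEnum_succ h, add_comm]

lemma topSum_card (S : Finset (Fin e)) : topSum S S.card = colSum S := by
  induction S using Finset.strongInduction with
  | H S ih =>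
    rcases S.eq_empty_or_nonempty with rfl | h
    · simp [topSum, colSum]
    have hm := S.max'_mem h
    rw [← Finset.card_erase_add_one hm, topSum_succ h, ih _ (Finset.erase_ssubset hm),
      colSum_erase hm]
    ring

lemma topSum_singleton (a : Fin e) : topSum {a} 1 = (a : ℕ) := by
  simpa [colSum] using topSum_card {a}

lemma colSum_le_topSum {C S : Finset (Fin e)} (hCS : C ⊆ S) : colSum C ≤ topSum S C.card := by
  induction S using Finset.strongInduction generalizing C with
  | H S ih =>
    rcases C.eq_empty_or_nonempty with rfl | hC
    · simp [topSum, colSum]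
    have hS := hC.mono hCS
    set m := S.max' hS
    set c := C.max' hC
    have hcm : c ≤ m := S.le_max' _ (hCS (C.max'_mem hC))
    have hsub : C.erase c ⊆ S.erase m := by
      intro b hb
      obtain ⟨hbc, hbC⟩ := Finset.mem_erase.1 hb
      refine Finset.mem_erase.2 ⟨fun hbm => hbc (le_antisymm (C.le_max' _ hbC) ?_), hCS hbC⟩
      exact hbm ▸ hcm
    calc colSum C = (c : ℕ) + colSum (C.erase c) := by rw [colSum_erase (C.max'_mem hC)]; ring
      _ ≤ (m : ℕ) + topSum (S.erase m) (C.erase c).card :=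
          add_le_add (by exact_mod_cast hcm) (ih _ (Finset.erase_ssubset (S.max'_mem hS)) hsub)
      _ = topSum S C.card := by
          rw [← topSum_succ hS, Finset.card_erase_add_one (C.max'_mem hC)]

lemma exists_subset_colSum_eq_topSum {S : Finset (Fin e)} {z : ℕ} (hz : z ≤ S.card) :
    ∃ C ⊆ S, C.card = z ∧ colSum C = topSum S z := by
  induction z generalizing S with
  | zero => exact ⟨∅, Finset.empty_subset S, rfl, by simp [topSum, colSum]⟩
  | succ z ih =>
    have hS : S.Nonempty := Finset.card_pos.1 (by omega)
    have hm := S.max'_mem hS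
    obtain ⟨C, hCS, hC, hsum⟩ :=
      ih (S := S.erase (S.max' hS)) (by rw [Finset.card_erase_of_mem hm]; omega)
    have hmC : S.max' hS ∉ C := fun h => (Finset.mem_erase.1 (hCS h)).1 rfl
    refine ⟨insert (S.max' hS) C, Finset.insert_subset hm (hCS.trans (Finset.erase_subset _ _)),
      by rw [Finset.card_insert_of_notMem hmC, hC], ?_⟩
    rw [colSum_insert hmC, topSum_succ hS, ← hsum]

lemma topSum_insert_le {A : Finset (Fin e)} {a b : Fin e} (ha : a ∉ A) (hb : b ∉ A) {z : ℕ}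
    (hz : z ≤ A.card + 1) :
    topSum (insert a A) z ≤ topSum (insert b A) z + max (((a : ℕ) : ℤ) - (b : ℕ)) 0 := by
  obtain ⟨C, hCS, rfl, hsum⟩ :=
    exists_subset_colSum_eq_topSum (S := insert a A) (z := z)
      (by rwa [Finset.card_insert_of_notMem ha])
  rw [← hsum]
  by_cases haC : a ∈ C
  · have hCA : C.erase a ⊆ A := fun c hc => by
      obtain ⟨hca, hcC⟩ := Finset.mem_erase.1 hc
      exact (Finset.mem_insert.1 (hCS hcC)).resolve_left hca
    have hbC : b ∉ C.erase a := fun h => hb (hCA h)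
    have key := colSum_le_topSum (Finset.insert_subset_insert b hCA)
    rw [Finset.card_insert_of_notMem hbC, Finset.card_erase_add_one haC, colSum_insert hbC,
      colSum_erase haC] at key
    have := le_max_left (((a : ℕ) : ℤ) - (b : ℕ)) 0
    linarith
  · have hCA : C ⊆ insert b A := fun c hc => Finset.mem_insert_of_mem
      ((Finset.mem_insert.1 (hCS hc)).resolve_left (ne_of_mem_of_not_mem hc haC))
    have := colSum_le_topSum hCA
    have := le_max_right (((a : ℕ) : ℤ) - (b : ℕ)) 0
    linarith

end TopSums

section DominanceCriterion

variable {e r : ℕ}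

lemma nsum_ofRows (R : Fin r → Finset (Fin e)) (s : Fin r) :
    nsum (fun _ => 0) (ofRows R) s = (R s).card := by
  simp [nsum, beads, rank_const_zero, ofRows]

lemma Pt0_ofRows_of_lt {R : Fin r → Finset (Fin e)} {s : Fin r} {p : ℕ} (hp : p < (R s).card) :
    (Pt0 (ofRows R) s p : ℤ) = decEnum (R s) p + (p + 1) - (R s).card := by
  have := sub_one_sub_le_decEnum hp
  rw [Pt0, PtPart, Tset_ofRows, tEnum_range (decEnum_strictAnti _), nsum_ofRows,
    Int.toNat_of_nonneg (by omega)]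

lemma Pt0_ofRows_of_le {R : Fin r → Finset (Fin e)} {s : Fin r} {p : ℕ} (hp : (R s).card ≤ p) :
    Pt0 (ofRows R) s p = 0 := by
  rw [Pt0, PtPart, Tset_ofRows, tEnum_range (decEnum_strictAnti _), nsum_ofRows,
    decEnum_of_card_le hp, show ((R s).card - 1 - p + (p + 1) - (R s).card : ℤ) = 0 by ring]
  rfl

lemma sum_range_Pt0_ofRows_min (R : Fin r → Finset (Fin e)) (s : Fin r) (z : ℕ) :
    ∑ x ∈ Finset.range z, Pt0 (ofRows R) s x =
      ∑ x ∈ Finset.range (min z (R s).card), Pt0 (ofRows R) s x := by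
  refine (Finset.sum_subset (by simp) fun x hx hx' => Pt0_ofRows_of_le ?_).symm
  simp only [Finset.mem_range] at hx hx'
  omega

def offset (n z : ℕ) : ℤ := ∑ x ∈ Finset.range z, ((x : ℤ) + 1 - n)

lemma sum_range_Pt0_ofRows {R : Fin r → Finset (Fin e)} {s : Fin r} {z : ℕ}
    (hz : z ≤ (R s).card) :
    ∑ x ∈ Finset.range z, (Pt0 (ofRows R) s x : ℤ) = topSum (R s) z + offset (R s).card z := by
  rw [topSum, offset, ← Finset.sum_add_distrib]
  refine Finset.sum_congr rfl fun x hx => ?_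
  rw [Pt0_ofRows_of_lt (lt_of_lt_of_le (Finset.mem_range.1 hx) hz)]
  ring

lemma psize_Pt0_ofRows (R : Fin r → Finset (Fin e)) (s : Fin r) :
    (psize (Pt0 (ofRows R) s) : ℤ) = colSum (R s) + offset (R s).card (R s).card := by
  rw [psize, finsum_eq_sum_of_support_subset _ (s := Finset.range (R s).card) ?_, Nat.cast_sum,
    sum_range_Pt0_ofRows le_rfl, topSum_card]
  intro x hx
  by_contra h
  simp only [Finset.coe_range, Set.mem_Iio, not_lt] at h
  exact hx (Pt0_ofRows_of_le h)

def domSum (R : Fin r → Finset (Fin e)) (t : Fin r) (z : ℕ) : ℤ :=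
  (∑ q ∈ Finset.univ.filter (· < t), colSum (R q)) + topSum (R t) z

lemma sum_psize_add_sum_Pt0_ofRows {R : Fin r → Finset (Fin e)} {t : Fin r} {z : ℕ}
    (hz : z ≤ (R t).card) :
    (∑ q ∈ Finset.univ.filter (· < t), (psize (Pt0 (ofRows R) q) : ℤ)) +
        ∑ x ∈ Finset.range z, (Pt0 (ofRows R) t x : ℤ) =
      domSum R t z + ((∑ q ∈ Finset.univ.filter (· < t), offset (R q).card (R q).card) +
        offset (R t).card z) := by
  rw [sum_range_Pt0_ofRows hz, domSum]
  simp only [psize_Pt0_ofRows, Finset.sum_add_distrib]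
  ring

variable {R R' : Fin r → Finset (Fin e)}

lemma domSum_le_of_dom (hc : ∀ q, (R q).card = (R' q).card)
    (h : Dom (Pt0 (ofRows R)) (Pt0 (ofRows R'))) {t : Fin r} {z : ℕ} (hz : z ≤ (R t).card) :
    domSum R' t z ≤ domSum R t z := by
  have := h t z
  zify at this
  rw [sum_psize_add_sum_Pt0_ofRows hz, sum_psize_add_sum_Pt0_ofRows (hc t ▸ hz)] at this
  simp only [← hc] at this
  linarith

lemma dom_of_domSum_le (hc : ∀ q, (R q).card = (R' q).card)
    (h : ∀ t z, z ≤ (R t).card → domSum R' t z ≤ domSum R t z) :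
    Dom (Pt0 (ofRows R)) (Pt0 (ofRows R')) := by
  intro t z
  rw [sum_range_Pt0_ofRows_min R, sum_range_Pt0_ofRows_min R', ← hc t]
  have hz := min_le_right z (R t).card
  zify
  rw [sum_psize_add_sum_Pt0_ofRows hz, sum_psize_add_sum_Pt0_ofRows (hc t ▸ hz)]
  simp only [← hc]
  linarith [h t _ hz]

lemma sdom_of_domSum_lt (hc : ∀ q, (R q).card = (R' q).card)
    (h : ∀ t z, z ≤ (R t).card → domSum R' t z ≤ domSum R t z)
    {t : Fin r} {z : ℕ} (hz : z ≤ (R t).card) (hlt : domSum R' t z < domSum R t z) :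
    SDom (Pt0 (ofRows R)) (Pt0 (ofRows R')) := by
  refine ⟨dom_of_domSum_le hc h, fun heq => hlt.ne' (le_antisymm ?_ (h t z hz))⟩
  refine domSum_le_of_dom (fun q => (hc q).symm) (heq ▸ ?_) (hc t ▸ hz)
  exact fun _ _ => le_rfl

end DominanceCriterion

section BeadSwap

variable {e r : ℕ}

lemma sum_filter_lt_of_eq_sub_add {f g : Fin r → ℤ} {s t : Fin r} {δ : ℤ}
    (h : ∀ q, f q = g q + (if q = s then δ else 0) - (if q = t then δ else 0)) (t' : Fin r) :
    ∑ q ∈ Finset.univ.filter (· < t'), f q =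
      (∑ q ∈ Finset.univ.filter (· < t'), g q) + (if s < t' then δ else 0) -
        (if t < t' then δ else 0) := by
  simp only [h, Finset.sum_sub_distrib, Finset.sum_add_distrib, Finset.sum_ite_eq',
    Finset.mem_filter, Finset.mem_univ, true_and]

theorem sdom_Pt0_ofRows_of_swap {R R' : Fin r → Finset (Fin e)} {s t : Fin r} {a b : Fin e}
    {A B : Finset (Fin e)} (hst : s < t) (hab : a < b)
    (haA : a ∉ A) (hbA : b ∉ A) (haB : a ∉ B) (hbB : b ∉ B)
    (hRs : R s = insert b A) (hR's : R' s = insert a A)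
    (hRt : R t = insert a B) (hR't : R' t = insert b B)
    (hR : ∀ q, q ≠ s → q ≠ t → R' q = R q) :
    SDom (Pt0 (ofRows R)) (Pt0 (ofRows R')) := by
  set δ : ℤ := ((b : ℕ) : ℤ) - (a : ℕ) with hδ
  have hδpos : 0 < δ := by rw [hδ, sub_pos]; exact_mod_cast hab
  have hc (q : Fin r) : (R q).card = (R' q).card := by
    rcases eq_or_ne q s with rfl | hqs
    · simp [hRs, hR's, haA, hbA]
    rcases eq_or_ne q t with rfl | hqt
    · simp [hRt, hR't, haB, hbB]
    rw [hR q hqs hqt]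
  have hpre := sum_filter_lt_of_eq_sub_add (f := fun q => colSum (R q)) (s := s) (t := t)
    (g := fun q => colSum (R' q)) (δ := δ) fun q => by
      rcases eq_or_ne q s with rfl | hqs
      · rw [hRs, hR's, colSum_insert hbA, colSum_insert haA, if_pos rfl, if_neg hst.ne]; ring
      rcases eq_or_ne q t with rfl | hqt
      · rw [hRt, hR't, colSum_insert haB, colSum_insert hbB, if_neg hqs, if_pos rfl]; ring
      rw [hR q hqs hqt, if_neg hqs, if_neg hqt]; ring
  have hle (t' : Fin r) (z : ℕ) (hz : z ≤ (R t').card) : domSum R' t' z ≤ domSum R t' z := by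
    simp only [domSum, hpre]
    rcases eq_or_ne t' s with rfl | hts
    · have := topSum_insert_le haA hbA (z := z) (by simpa [hRs, hbA] using hz)
      rw [max_eq_right (by rw [sub_nonpos]; exact_mod_cast hab.le)] at this
      simp only [lt_irrefl, if_false, if_neg (not_lt.2 hst.le), hRs, hR's]
      linarith
    rcases eq_or_ne t' t with rfl | htt
    · have := topSum_insert_le hbB haB (z := z) (by simpa [hRt, haB] using hz)
      rw [max_eq_left hδpos.le] at this
      simp only [lt_irrefl, if_false, if_pos hst, hRt, hR't]
      linarith
    rw [hR t' hts htt]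
    split_ifs with hs ht ht
    · linarith
    · linarith
    · exact absurd (hst.trans ht) hs
    · linarith
  refine sdom_of_domSum_lt hc hle (t := t) (z := 0) (Nat.zero_le _) ?_
  simp only [domSum, hpre, if_pos hst, lt_irrefl, if_false, topSum, Finset.range_zero,
    Finset.sum_empty]
  linarith

end BeadSwap

section Fin3

variable {e : ℕ}

lemma domSum_zero (R : Fin 3 → Finset (Fin e)) (z : ℕ) : domSum R 0 z = topSum (R 0) z := by
  simp [domSum]

lemma domSum_one (R : Fin 3 → Finset (Fin e)) (z : ℕ) :
    domSum R 1 z = colSum (R 0) + topSum (R 1) z := by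
  rw [domSum, show Finset.univ.filter (· < (1 : Fin 3)) = {0} by decide, Finset.sum_singleton]

lemma domSum_two (R : Fin 3 → Finset (Fin e)) (z : ℕ) :
    domSum R 2 z = colSum (R 0) + colSum (R 1) + topSum (R 2) z := by
  rw [domSum, show Finset.univ.filter (· < (2 : Fin 3)) = {0, 1} by decide,
    Finset.sum_pair (by decide)]

end Fin3

section Matrices

variable {e : ℕ} (Y Z : Finset (Fin e))

/- Rows of `α^u_k` (at `a = i_k`), of `β^u_l` (at `a = j_l`) and of `γ^u_{kl}`; the index `₁`
stands for `u = 1 : Fin 6`, the paper's `u = 2`, and `₂` for the paper's `u = 3`. -/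

def alphaBetaRows₁ (a : Fin e) : Fin 3 → Finset (Fin e) := ![(Y ∪ Z).erase a, {a}, Z]

def gammaRows₁ (i j : Fin e) : Fin 3 → Finset (Fin e) :=
  ![(Y ∪ Z).erase i, {j}, insert i (Z.erase j)]

def alphaBetaRows₂ (a : Fin e) : Fin 3 → Finset (Fin e) := ![Y, (Y ∪ Z).erase a, {a}]

def gammaRows₂ (i j : Fin e) : Fin 3 → Finset (Fin e) :=
  ![insert j (Y.erase i), (Y ∪ Z).erase j, {i}]

variable {Y Z} {y z : ℕ} (hY : Y.card = y + 1) (hZ : Z.card = z + 1)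

lemma alphaM_one (hYZ : Disjoint Y Z) (k : Fin (y + 1)) :
    alphaM Y Z hY 1 k = ofRows (alphaBetaRows₁ Y Z (Y.orderEmbOfFin hY k)) := by
  have hk := Y.orderEmbOfFin_mem hY k
  funext s c
  fin_cases s <;> by_cases hc : c = Y.orderEmbOfFin hY k <;> by_cases hcY : c ∈ Y <;>
    by_cases hcZ : c ∈ Z <;>
    simp_all [alphaBetaRows₁, alphaM, ofRows, ycol, zcol, aacol, Finset.disjoint_left]

lemma betaM_one (hYZ : Disjoint Y Z) (l : Fin (z + 1)) :
    betaM Y Z hZ 1 l = ofRows (alphaBetaRows₁ Y Z (Z.orderEmbOfFin hZ l)) := by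
  have hl := Z.orderEmbOfFin_mem hZ l
  have hlY : Z.orderEmbOfFin hZ l ∉ Y := Finset.disjoint_right.1 hYZ hl
  funext s c
  fin_cases s <;> by_cases hc : c = Z.orderEmbOfFin hZ l <;> by_cases hcY : c ∈ Y <;>
    by_cases hcZ : c ∈ Z <;>
    simp_all [alphaBetaRows₁, betaM, ofRows, ycol, zcol, abcol, Finset.disjoint_left]

lemma gammaM_one (hYZ : Disjoint Y Z) (k : Fin (y + 1)) (l : Fin (z + 1)) :
    gammaM Y Z hY hZ 1 k l =
      ofRows (gammaRows₁ Y Z (Y.orderEmbOfFin hY k) (Z.orderEmbOfFin hZ l)) := by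
  have hk := Y.orderEmbOfFin_mem hY k
  have hl := Z.orderEmbOfFin_mem hZ l
  have hkl : Y.orderEmbOfFin hY k ≠ Z.orderEmbOfFin hZ l := fun h =>
    Finset.disjoint_left.1 hYZ hk (h ▸ hl)
  funext s c
  fin_cases s <;> by_cases hc : c = Y.orderEmbOfFin hY k <;>
    by_cases hc' : c = Z.orderEmbOfFin hZ l <;> by_cases hcY : c ∈ Y <;> by_cases hcZ : c ∈ Z <;>
    simp_all [gammaRows₁, gammaM, ofRows, ycol, zcol, oycol, ozcol, Finset.disjoint_left]

lemma alphaM_two (hYZ : Disjoint Y Z) (k : Fin (y + 1)) :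
    alphaM Y Z hY 2 k = ofRows (alphaBetaRows₂ Y Z (Y.orderEmbOfFin hY k)) := by
  have hk := Y.orderEmbOfFin_mem hY k
  funext s c
  fin_cases s <;> by_cases hc : c = Y.orderEmbOfFin hY k <;> by_cases hcY : c ∈ Y <;>
    by_cases hcZ : c ∈ Z <;>
    simp_all [alphaBetaRows₂, alphaM, ofRows, ycol, zcol, aacol, Finset.disjoint_left]

lemma betaM_two (hYZ : Disjoint Y Z) (l : Fin (z + 1)) :
    betaM Y Z hZ 2 l = ofRows (alphaBetaRows₂ Y Z (Z.orderEmbOfFin hZ l)) := by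
  have hl := Z.orderEmbOfFin_mem hZ l
  have hlY : Z.orderEmbOfFin hZ l ∉ Y := Finset.disjoint_right.1 hYZ hl
  funext s c
  fin_cases s <;> by_cases hc : c = Z.orderEmbOfFin hZ l <;> by_cases hcY : c ∈ Y <;>
    by_cases hcZ : c ∈ Z <;>
    simp_all [alphaBetaRows₂, betaM, ofRows, ycol, zcol, abcol, Finset.disjoint_left]

lemma gammaM_two (hYZ : Disjoint Y Z) (k : Fin (y + 1)) (l : Fin (z + 1)) :
    gammaM Y Z hY hZ 2 k l =
      ofRows (gammaRows₂ Y Z (Y.orderEmbOfFin hY k) (Z.orderEmbOfFin hZ l)) := by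
  have hk := Y.orderEmbOfFin_mem hY k
  have hl := Z.orderEmbOfFin_mem hZ l
  have hkl : Y.orderEmbOfFin hY k ≠ Z.orderEmbOfFin hZ l := fun h =>
    Finset.disjoint_left.1 hYZ hk (h ▸ hl)
  funext s c
  fin_cases s <;> by_cases hc : c = Y.orderEmbOfFin hY k <;>
    by_cases hc' : c = Z.orderEmbOfFin hZ l <;> by_cases hcY : c ∈ Y <;> by_cases hcZ : c ∈ Z <;>
    simp_all [gammaRows₂, gammaM, ofRows, ycol, zcol, oycol, ozcol, Finset.disjoint_left]

variable {a i j : Fin e}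

lemma card_alphaBetaRows₁ (ha : a ∈ Y ∪ Z) (q : Fin 3) :
    (alphaBetaRows₁ Y Z a q).card = ![(Y ∪ Z).card - 1, 1, Z.card] q := by
  fin_cases q <;> simp [alphaBetaRows₁, Finset.card_erase_of_mem ha]

lemma card_gammaRows₁ (hYZ : Disjoint Y Z) (hi : i ∈ Y) (hj : j ∈ Z) (q : Fin 3) :
    (gammaRows₁ Y Z i j q).card = ![(Y ∪ Z).card - 1, 1, Z.card] q := by
  have hiZ : i ∉ Z.erase j := fun h => Finset.disjoint_left.1 hYZ hi (Finset.mem_of_mem_erase h)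
  fin_cases q <;> simp [gammaRows₁, Finset.card_erase_of_mem (Finset.mem_union_left Z hi),
    Finset.card_insert_of_notMem hiZ, Finset.card_erase_add_one hj]

lemma card_alphaBetaRows₂ (ha : a ∈ Y ∪ Z) (q : Fin 3) :
    (alphaBetaRows₂ Y Z a q).card = ![Y.card, (Y ∪ Z).card - 1, 1] q := by
  fin_cases q <;> simp [alphaBetaRows₂, Finset.card_erase_of_mem ha]

lemma card_gammaRows₂ (hYZ : Disjoint Y Z) (hi : i ∈ Y) (hj : j ∈ Z) (q : Fin 3) :
    (gammaRows₂ Y Z i j q).card = ![Y.card, (Y ∪ Z).card - 1, 1] q := by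
  have hjY : j ∉ Y.erase i := fun h => Finset.disjoint_right.1 hYZ hj (Finset.mem_of_mem_erase h)
  fin_cases q <;> simp [gammaRows₂, Finset.card_erase_of_mem (Finset.mem_union_right Y hj),
    Finset.card_insert_of_notMem hjY, Finset.card_erase_add_one hi]

lemma domSum_alphaBetaRows₁ (ha : a ∈ Y ∪ Z) :
    domSum (alphaBetaRows₁ Y Z a) 1 0 = colSum (Y ∪ Z) - (a : ℕ) := by
  simp [domSum_one, alphaBetaRows₁, colSum_erase ha, topSum]

lemma domSum_gammaRows₁ (hi : i ∈ Y) :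
    domSum (gammaRows₁ Y Z i j) 1 0 = colSum (Y ∪ Z) - (i : ℕ) := by
  simp [domSum_one, gammaRows₁, colSum_erase (Finset.mem_union_left Z hi), topSum]

lemma domSum_alphaBetaRows₂ (ha : a ∈ Y ∪ Z) :
    domSum (alphaBetaRows₂ Y Z a) 2 0 = colSum Y + colSum (Y ∪ Z) - (a : ℕ) := by
  simp only [domSum_two, alphaBetaRows₂, Matrix.cons_val_zero, Matrix.cons_val_one, colSum_erase ha,
    topSum, Finset.range_zero, Matrix.cons_val, Finset.sum_empty, add_zero]
  ring

lemma domSum_gammaRows₂ (hYZ : Disjoint Y Z) (hi : i ∈ Y) (hj : j ∈ Z) :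
    domSum (gammaRows₂ Y Z i j) 2 0 = colSum Y + colSum (Y ∪ Z) - (i : ℕ) := by
  have hjY : j ∉ Y.erase i := fun h => Finset.disjoint_right.1 hYZ hj (Finset.mem_of_mem_erase h)
  simp only [domSum_two, gammaRows₂, Matrix.cons_val_zero, Matrix.cons_val_one, colSum_insert hjY,
    colSum_erase hi, colSum_erase (Finset.mem_union_right Y hj), topSum, Finset.range_zero,
    Matrix.cons_val, Finset.sum_empty, add_zero]
  ring

end Matrices

section Profile

variable {e : ℕ}

/-- What the theorem asserts, for `α_k = P i_k`, `β_l = P j_l` and `γ_{kl} = G i_k j_l`, once the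
order of indices is read as the order of the columns `i_k`, `j_l`. -/
structure DominanceProfile (Y Z : Finset (Fin e)) (P : Fin e → Fin 3 → ℕ → ℕ)
    (G : Fin e → Fin e → Fin 3 → ℕ → ℕ) : Prop where
  sdom_P_of_lt : ∀ a ∈ Y ∪ Z, ∀ b ∈ Y ∪ Z, a < b → SDom (P a) (P b)
  sdom_G_of_lt_right : ∀ i ∈ Y, ∀ j ∈ Z, ∀ j' ∈ Z, j < j' → SDom (G i j') (G i j)
  sdom_G_of_lt_left : ∀ i ∈ Y, ∀ i' ∈ Y, ∀ j ∈ Z, i < i' → SDom (G i j) (G i' j)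
  le_of_dom_G_G : ∀ i ∈ Y, ∀ i' ∈ Y, ∀ j ∈ Z, ∀ j' ∈ Z, Dom (G i j) (G i' j') → i ≤ i'
  le_of_dom_G_P : ∀ i ∈ Y, ∀ j ∈ Z, ∀ a ∈ Y ∪ Z, Dom (G i j) (P a) → i ≤ a
  le_of_dom_P_G : ∀ i ∈ Y, ∀ j ∈ Z, ∀ a ∈ Y ∪ Z, Dom (P a) (G i j) → a ≤ i
  le_of_dom_G_P_self : ∀ i ∈ Y, ∀ j ∈ Z, Dom (G i j) (P i) → i ≤ j
  le_of_dom_P_G_self : ∀ i ∈ Y, ∀ j ∈ Z, Dom (P i) (G i j) → j ≤ i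

lemma le_of_sub_val_le_sub_val {a b : Fin e} {c : ℤ} (h : c - (b : ℕ) ≤ c - (a : ℕ)) : a ≤ b := by
  exact_mod_cast (show ((a : ℕ) : ℤ) ≤ (b : ℕ) by linarith)

variable {Y Z : Finset (Fin e)}

theorem dominanceProfile_one (hYZ : Disjoint Y Z) :
    DominanceProfile Y Z (fun a => Pt0 (ofRows (alphaBetaRows₁ Y Z a)))
      (fun i j => Pt0 (ofRows (gammaRows₁ Y Z i j))) where
  sdom_P_of_lt a ha b hb hab := by
    apply sdom_Pt0_ofRows_of_swap (s := 0) (t := 1) (A := ((Y ∪ Z).erase a).erase b) (B := ∅)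
      (by decide) hab
    all_goals simp [alphaBetaRows₁, Finset.ext_iff, Fin.forall_fin_succ] <;> grind
  sdom_G_of_lt_right i hi j hj j' hj' hjj' := by
    have hiZ := Finset.disjoint_left.1 hYZ hi
    apply sdom_Pt0_ofRows_of_swap (s := 1) (t := 2) (A := ∅)
      (B := insert i ((Z.erase j).erase j')) (by decide) hjj'
    all_goals simp [gammaRows₁, Finset.ext_iff, Fin.forall_fin_succ] <;> grind
  sdom_G_of_lt_left i hi i' hi' j hj hii' := by
    have hiZ := Finset.disjoint_left.1 hYZ hi
    have hi'Z := Finset.disjoint_left.1 hYZ hi'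
    apply sdom_Pt0_ofRows_of_swap (s := 0) (t := 2) (A := ((Y ∪ Z).erase i).erase i')
      (B := Z.erase j) (by decide) hii'
    all_goals simp [gammaRows₁, Finset.ext_iff, Fin.forall_fin_succ] <;> grind
  le_of_dom_G_G i hi i' hi' j hj j' hj' h := le_of_sub_val_le_sub_val <| by
    simpa only [domSum_gammaRows₁ hi, domSum_gammaRows₁ hi'] using domSum_le_of_dom
      (fun q => (card_gammaRows₁ hYZ hi hj q).trans (card_gammaRows₁ hYZ hi' hj' q).symm) h
      (t := 1) (Nat.zero_le _)
  le_of_dom_G_P i hi j hj a ha h := le_of_sub_val_le_sub_val <| by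
    simpa only [domSum_gammaRows₁ hi, domSum_alphaBetaRows₁ ha] using domSum_le_of_dom
      (fun q => (card_gammaRows₁ hYZ hi hj q).trans (card_alphaBetaRows₁ ha q).symm) h
      (t := 1) (Nat.zero_le _)
  le_of_dom_P_G i hi j hj a ha h := le_of_sub_val_le_sub_val <| by
    simpa only [domSum_gammaRows₁ hi, domSum_alphaBetaRows₁ ha] using domSum_le_of_dom
      (fun q => (card_alphaBetaRows₁ ha q).trans (card_gammaRows₁ hYZ hi hj q).symm) h
      (t := 1) (Nat.zero_le _)
  le_of_dom_G_P_self i hi j hj h := by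
    have hiW := Finset.mem_union_left Z hi
    have := domSum_le_of_dom
      (fun q => (card_gammaRows₁ hYZ hi hj q).trans (card_alphaBetaRows₁ hiW q).symm) h
      (t := 1) (z := 1) (by simp [gammaRows₁])
    simp only [domSum_one, alphaBetaRows₁, gammaRows₁] at this
    exact_mod_cast (show ((i : ℕ) : ℤ) ≤ (j : ℕ) by simpa [topSum_singleton] using this)
  le_of_dom_P_G_self i hi j hj h := by
    have hiW := Finset.mem_union_left Z hi
    have := domSum_le_of_dom
      (fun q => (card_alphaBetaRows₁ hiW q).trans (card_gammaRows₁ hYZ hi hj q).symm) h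
      (t := 1) (z := 1) (by simp [alphaBetaRows₁])
    simp only [domSum_one, alphaBetaRows₁, gammaRows₁] at this
    exact_mod_cast (show ((j : ℕ) : ℤ) ≤ (i : ℕ) by simpa [topSum_singleton] using this)

theorem dominanceProfile_two (hYZ : Disjoint Y Z) :
    DominanceProfile Y Z (fun a => Pt0 (ofRows (alphaBetaRows₂ Y Z a)))
      (fun i j => Pt0 (ofRows (gammaRows₂ Y Z i j))) where
  sdom_P_of_lt a ha b hb hab := by
    apply sdom_Pt0_ofRows_of_swap (s := 1) (t := 2) (A := ((Y ∪ Z).erase a).erase b) (B := ∅)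
      (by decide) hab
    all_goals simp [alphaBetaRows₂, Finset.ext_iff, Fin.forall_fin_succ] <;> grind
  sdom_G_of_lt_right i hi j hj j' hj' hjj' := by
    have hjY := Finset.disjoint_right.1 hYZ hj
    have hj'Y := Finset.disjoint_right.1 hYZ hj'
    apply sdom_Pt0_ofRows_of_swap (s := 0) (t := 1) (A := Y.erase i)
      (B := ((Y ∪ Z).erase j).erase j') (by decide) hjj'
    all_goals simp [gammaRows₂, Finset.ext_iff, Fin.forall_fin_succ] <;> grind
  sdom_G_of_lt_left i hi i' hi' j hj hii' := by
    have hjY := Finset.disjoint_right.1 hYZ hj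
    apply sdom_Pt0_ofRows_of_swap (s := 0) (t := 2) (A := insert j ((Y.erase i).erase i'))
      (B := ∅) (by decide) hii'
    all_goals simp [gammaRows₂, Finset.ext_iff, Fin.forall_fin_succ] <;> grind
  le_of_dom_G_G i hi i' hi' j hj j' hj' h := le_of_sub_val_le_sub_val <| by
    simpa only [domSum_gammaRows₂ hYZ hi hj, domSum_gammaRows₂ hYZ hi' hj'] using domSum_le_of_dom
      (fun q => (card_gammaRows₂ hYZ hi hj q).trans (card_gammaRows₂ hYZ hi' hj' q).symm) h
      (t := 2) (Nat.zero_le _)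
  le_of_dom_G_P i hi j hj a ha h := le_of_sub_val_le_sub_val <| by
    simpa only [domSum_gammaRows₂ hYZ hi hj, domSum_alphaBetaRows₂ ha] using domSum_le_of_dom
      (fun q => (card_gammaRows₂ hYZ hi hj q).trans (card_alphaBetaRows₂ ha q).symm) h
      (t := 2) (Nat.zero_le _)
  le_of_dom_P_G i hi j hj a ha h := le_of_sub_val_le_sub_val <| by
    simpa only [domSum_gammaRows₂ hYZ hi hj, domSum_alphaBetaRows₂ ha] using domSum_le_of_dom
      (fun q => (card_alphaBetaRows₂ ha q).trans (card_gammaRows₂ hYZ hi hj q).symm) h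
      (t := 2) (Nat.zero_le _)
  le_of_dom_G_P_self i hi j hj h := by
    have hjY : j ∉ Y.erase i := fun h => Finset.disjoint_right.1 hYZ hj (Finset.mem_of_mem_erase h)
    have hc := card_gammaRows₂ hYZ hi hj
    have hc' := card_alphaBetaRows₂ (Finset.mem_union_left Z hi)
    have := domSum_le_of_dom (fun q => (hc q).trans (hc' q).symm) h (t := 0) (z := Y.card) (hc 0).ge
    have hc0 : (insert j (Y.erase i)).card = Y.card := hc 0
    simp only [domSum_zero, alphaBetaRows₂, gammaRows₂, Matrix.cons_val_zero] at this
    rw [topSum_card, ← hc0, topSum_card, colSum_insert hjY, colSum_erase hi] at this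
    exact_mod_cast (show ((i : ℕ) : ℤ) ≤ (j : ℕ) by linarith)
  le_of_dom_P_G_self i hi j hj h := by
    have hjY : j ∉ Y.erase i := fun h => Finset.disjoint_right.1 hYZ hj (Finset.mem_of_mem_erase h)
    have hc := card_gammaRows₂ hYZ hi hj
    have hc' := card_alphaBetaRows₂ (Finset.mem_union_left Z hi)
    have := domSum_le_of_dom (fun q => (hc' q).trans (hc q).symm) h (t := 0) (z := Y.card) le_rfl
    have hc0 : (insert j (Y.erase i)).card = Y.card := hc 0
    simp only [domSum_zero, alphaBetaRows₂, gammaRows₂, Matrix.cons_val_zero] at this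
    rw [topSum_card, ← hc0, topSum_card, colSum_insert hjY, colSum_erase hi] at this
    exact_mod_cast (show ((j : ℕ) : ℤ) ≤ (i : ℕ) by linarith)

theorem exists_dominanceProfile {y z : ℕ} (hY : Y.card = y + 1) (hZ : Z.card = z + 1)
    (hYZ : Disjoint Y Z) {u : Fin 6} (hu : u = 1 ∨ u = 2) :
    ∃ P G, DominanceProfile Y Z P G ∧
      (∀ k, Pt0 (alphaM Y Z hY u k) = P (Y.orderEmbOfFin hY k)) ∧
      (∀ l, Pt0 (betaM Y Z hZ u l) = P (Z.orderEmbOfFin hZ l)) ∧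
      ∀ k l, Pt0 (gammaM Y Z hY hZ u k l) = G (Y.orderEmbOfFin hY k) (Z.orderEmbOfFin hZ l) := by
  rcases hu with rfl | rfl
  · exact ⟨_, _, dominanceProfile_one hYZ, fun k => congrArg Pt0 (alphaM_one hY hYZ k),
      fun l => congrArg Pt0 (betaM_one hZ hYZ l),
      fun k l => congrArg Pt0 (gammaM_one hY hZ hYZ k l)⟩
  · exact ⟨_, _, dominanceProfile_two hYZ, fun k => congrArg Pt0 (alphaM_two hY hYZ k),
      fun l => congrArg Pt0 (betaM_two hZ hYZ l),
      fun k l => congrArg Pt0 (gammaM_two hY hZ hYZ k l)⟩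

end Profile

theorem Duset_dominance_relations_general (e : ℕ)
    (Y Z : Finset (Fin e)) {y z : ℕ} (hY : Y.card = y + 1) (hZ : Z.card = z + 1)
    (hYZ : Disjoint Y Z)
    (u : Fin 6) (hu : u = 1 ∨ u = 2) :
    -- (i)
    ((∀ (k : Fin (y + 1)) (hk : k.1 + 1 < y + 1),
        SDom (Pt0 (alphaM Y Z hY u k)) (Pt0 (alphaM Y Z hY u ⟨k.1 + 1, hk⟩))) ∧
      (∀ (l : Fin (z + 1)) (hl : l.1 + 1 < z + 1),
        SDom (Pt0 (betaM Y Z hZ u l)) (Pt0 (betaM Y Z hZ u ⟨l.1 + 1, hl⟩)))) ∧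
    -- (ii)
    ((∀ (k : Fin (y + 1)) (l : Fin (z + 1)),
        Y.orderEmbOfFin hY k < Z.orderEmbOfFin hZ l →
          SDom (Pt0 (alphaM Y Z hY u k)) (Pt0 (betaM Y Z hZ u l))) ∧
      (∀ (k : Fin (y + 1)) (l : Fin (z + 1)),
        Z.orderEmbOfFin hZ l < Y.orderEmbOfFin hY k →
          SDom (Pt0 (betaM Y Z hZ u l)) (Pt0 (alphaM Y Z hY u k)))) ∧
    -- (iii)
    ((∀ (k : Fin (y + 1)) (l : Fin (z + 1)) (hl : l.1 + 1 < z + 1),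
        SDom (Pt0 (gammaM Y Z hY hZ u k ⟨l.1 + 1, hl⟩)) (Pt0 (gammaM Y Z hY hZ u k l))) ∧
      (∀ (k : Fin (y + 1)) (l : Fin (z + 1)) (hk : k.1 + 1 < y + 1),
        SDom (Pt0 (gammaM Y Z hY hZ u k l)) (Pt0 (gammaM Y Z hY hZ u ⟨k.1 + 1, hk⟩ l))) ∧
      (∀ (k k' : Fin (y + 1)) (l l' : Fin (z + 1)),
        Dom (Pt0 (gammaM Y Z hY hZ u k l)) (Pt0 (gammaM Y Z hY hZ u k' l')) → k ≤ k')) ∧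
    -- (iv)
    ((∀ (k v : Fin (y + 1)) (l : Fin (z + 1)),
        SDom (Pt0 (gammaM Y Z hY hZ u k l)) (Pt0 (alphaM Y Z hY u v)) → k ≤ v) ∧
      (∀ (k v : Fin (y + 1)) (l : Fin (z + 1)),
        SDom (Pt0 (alphaM Y Z hY u v)) (Pt0 (gammaM Y Z hY hZ u k l)) → v ≤ k)) ∧
    -- (v)
    ((∀ (k : Fin (y + 1)) (l : Fin (z + 1)),
        SDom (Pt0 (gammaM Y Z hY hZ u k l)) (Pt0 (alphaM Y Z hY u k)) →
          Y.orderEmbOfFin hY k < Z.orderEmbOfFin hZ l) ∧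
      (∀ (k : Fin (y + 1)) (l : Fin (z + 1)),
        SDom (Pt0 (alphaM Y Z hY u k)) (Pt0 (gammaM Y Z hY hZ u k l)) →
          Z.orderEmbOfFin hZ l < Y.orderEmbOfFin hY k)) ∧
    -- (vi)
    ((∀ (k : Fin (y + 1)) (l w : Fin (z + 1)),
        SDom (Pt0 (gammaM Y Z hY hZ u k l)) (Pt0 (betaM Y Z hZ u w)) →
          Y.orderEmbOfFin hY k < Z.orderEmbOfFin hZ w) ∧
      (∀ (k : Fin (y + 1)) (l w : Fin (z + 1)),
        SDom (Pt0 (betaM Y Z hZ u w)) (Pt0 (gammaM Y Z hY hZ u k l)) →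
          Z.orderEmbOfFin hZ w < Y.orderEmbOfFin hY k)) := by
  obtain ⟨P, G, hPG, hα, hβ, hγ⟩ := exists_dominanceProfile hY hZ hYZ hu
  simp only [hα, hβ, hγ]
  set i := Y.orderEmbOfFin hY
  set j := Z.orderEmbOfFin hZ
  have hiY k : i k ∈ Y := Y.orderEmbOfFin_mem hY k
  have hjZ l : j l ∈ Z := Z.orderEmbOfFin_mem hZ l
  have hiW k : i k ∈ Y ∪ Z := Finset.mem_union_left Z (hiY k)
  have hjW l : j l ∈ Y ∪ Z := Finset.mem_union_right Y (hjZ l)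
  have hij k l : i k ≠ j l := fun h => Finset.disjoint_left.1 hYZ (hiY k) (h ▸ hjZ l)
  have hsucc {n} (m : Fin (n + 1)) (hm : m.1 + 1 < n + 1) : m < ⟨m.1 + 1, hm⟩ := Nat.lt_succ_self _
  refine ⟨⟨fun k hk => hPG.sdom_P_of_lt _ (hiW k) _ (hiW _) (i.strictMono (hsucc k hk)),
      fun l hl => hPG.sdom_P_of_lt _ (hjW l) _ (hjW _) (j.strictMono (hsucc l hl))⟩,
    ⟨fun k l h => hPG.sdom_P_of_lt _ (hiW k) _ (hjW l) h,
      fun k l h => hPG.sdom_P_of_lt _ (hjW l) _ (hiW k) h⟩,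
    ⟨fun k l hl => hPG.sdom_G_of_lt_right _ (hiY k) _ (hjZ l) _ (hjZ _) (j.strictMono (hsucc l hl)),
      fun k l hk => hPG.sdom_G_of_lt_left _ (hiY k) _ (hiY _) _ (hjZ l) (i.strictMono (hsucc k hk)),
      fun k k' l l' h =>
        i.le_iff_le.1 (hPG.le_of_dom_G_G _ (hiY k) _ (hiY k') _ (hjZ l) _ (hjZ l') h)⟩,
    ⟨fun k v l h => i.le_iff_le.1 (hPG.le_of_dom_G_P _ (hiY k) _ (hjZ l) _ (hiW v) h.1),
      fun k v l h => i.le_iff_le.1 (hPG.le_of_dom_P_G _ (hiY k) _ (hjZ l) _ (hiW v) h.1)⟩,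
    ⟨fun k l h => (hPG.le_of_dom_G_P_self _ (hiY k) _ (hjZ l) h.1).lt_of_ne (hij k l),
      fun k l h => (hPG.le_of_dom_P_G_self _ (hiY k) _ (hjZ l) h.1).lt_of_ne (hij k l).symm⟩,
    ⟨fun k l w h => (hPG.le_of_dom_G_P _ (hiY k) _ (hjZ l) _ (hjW w) h.1).lt_of_ne (hij k w),
      fun k l w h => (hPG.le_of_dom_P_G _ (hiY k) _ (hjZ l) _ (hjW w) h.1).lt_of_ne (hij k w).symm⟩⟩

/-- Dominance relations among the multipartitions of `D^u`
for `u ∈ {2,3}` (here `u : Fin 6` with `u = 1` or `u = 2`). -/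
theorem Duset_dominance_relations (e : ℕ) (he : 2 ≤ e)
    (X Y Z : Finset (Fin e)) {y z : ℕ} (hY : Y.card = y + 1) (hZ : Z.card = z + 1)
    (hXY : Disjoint X Y) (hXZ : Disjoint X Z) (hYZ : Disjoint Y Z)
    (hcover : X ∪ Y ∪ Z = Finset.univ)
    (u : Fin 6) (hu : u = 1 ∨ u = 2) :
    -- (i)
    ((∀ (k : Fin (y + 1)) (hk : k.1 + 1 < y + 1),
        SDom (Pt0 (alphaM Y Z hY u k)) (Pt0 (alphaM Y Z hY u ⟨k.1 + 1, hk⟩))) ∧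
      (∀ (l : Fin (z + 1)) (hl : l.1 + 1 < z + 1),
        SDom (Pt0 (betaM Y Z hZ u l)) (Pt0 (betaM Y Z hZ u ⟨l.1 + 1, hl⟩)))) ∧
    -- (ii)
    ((∀ (k : Fin (y + 1)) (l : Fin (z + 1)),
        Y.orderEmbOfFin hY k < Z.orderEmbOfFin hZ l →
          SDom (Pt0 (alphaM Y Z hY u k)) (Pt0 (betaM Y Z hZ u l))) ∧
      (∀ (k : Fin (y + 1)) (l : Fin (z + 1)),
        Z.orderEmbOfFin hZ l < Y.orderEmbOfFin hY k →
          SDom (Pt0 (betaM Y Z hZ u l)) (Pt0 (alphaM Y Z hY u k)))) ∧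
    -- (iii)
    ((∀ (k : Fin (y + 1)) (l : Fin (z + 1)) (hl : l.1 + 1 < z + 1),
        SDom (Pt0 (gammaM Y Z hY hZ u k ⟨l.1 + 1, hl⟩)) (Pt0 (gammaM Y Z hY hZ u k l))) ∧
      (∀ (k : Fin (y + 1)) (l : Fin (z + 1)) (hk : k.1 + 1 < y + 1),
        SDom (Pt0 (gammaM Y Z hY hZ u k l)) (Pt0 (gammaM Y Z hY hZ u ⟨k.1 + 1, hk⟩ l))) ∧
      (∀ (k k' : Fin (y + 1)) (l l' : Fin (z + 1)),
        Dom (Pt0 (gammaM Y Z hY hZ u k l)) (Pt0 (gammaM Y Z hY hZ u k' l')) → k ≤ k')) ∧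
    -- (iv)
    ((∀ (k v : Fin (y + 1)) (l : Fin (z + 1)),
        SDom (Pt0 (gammaM Y Z hY hZ u k l)) (Pt0 (alphaM Y Z hY u v)) → k ≤ v) ∧
      (∀ (k v : Fin (y + 1)) (l : Fin (z + 1)),
        SDom (Pt0 (alphaM Y Z hY u v)) (Pt0 (gammaM Y Z hY hZ u k l)) → v ≤ k)) ∧
    -- (v)
    ((∀ (k : Fin (y + 1)) (l : Fin (z + 1)),
        SDom (Pt0 (gammaM Y Z hY hZ u k l)) (Pt0 (alphaM Y Z hY u k)) →
          Y.orderEmbOfFin hY k < Z.orderEmbOfFin hZ l) ∧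
      (∀ (k : Fin (y + 1)) (l : Fin (z + 1)),
        SDom (Pt0 (alphaM Y Z hY u k)) (Pt0 (gammaM Y Z hY hZ u k l)) →
          Z.orderEmbOfFin hZ l < Y.orderEmbOfFin hY k)) ∧
    -- (vi)
    ((∀ (k : Fin (y + 1)) (l w : Fin (z + 1)),
        SDom (Pt0 (gammaM Y Z hY hZ u k l)) (Pt0 (betaM Y Z hZ u w)) →
          Y.orderEmbOfFin hY k < Z.orderEmbOfFin hZ w) ∧
      (∀ (k : Fin (y + 1)) (l w : Fin (z + 1)),
        SDom (Pt0 (betaM Y Z hZ u w)) (Pt0 (gammaM Y Z hY hZ u k l)) →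
          Z.orderEmbOfFin hZ w < Y.orderEmbOfFin hY k)) :=
  Duset_dominance_relations_general e Y Z hY hZ hYZ u hu

end
end AK
end
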